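/- arXiv:2505.06767 — 11 statements merged into one kernel-verified Lean document; each statement's English description precedes it below -/
import Mathlib

section
/- Let γ ∈ (0,1), n_h ∈ [0,1], n_c = 1 − n_h. Let p^h, p^c : ℕ → [0,∞) be probability mass functions on ℕ (nonnegative, summing to 1) with finite means Σ_{n≥0} n·p^h_n < ∞ and Σ_{n≥0} n·p^c_n < ∞. Set r_h = Σ_{n≥1} p^h_n, r_c = Σ_{n≥1} p^c_n and r = n_c·(1−γ)·r_c + n_h·r_h. Then n_h·Σ_{n≥0} n·L^h_r[p^h]_n + n_c·Σ_{n≥0} n·L^c_{r,γ}[p^c]_n = 0. -/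
/-- The mean-field operator for honest players. -/
noncomputable def Lh (r : ℝ) (p : ℕ → ℝ) : ℕ → ℝ
  | 0 => p 1 - r * p 0
  | n + 1 => p (n + 2) + r * p n - p (n + 1) - r * p (n + 1)

/-- The mean-field operator for probabilistic cheaters. -/
noncomputable def Lc (γ r : ℝ) (p : ℕ → ℝ) : ℕ → ℝ
  | 0 => (1 - γ) * p 1 - r * p 0
  | n + 1 => (1 - γ) * p (n + 2) + r * p n - (1 - γ) * p (n + 1) - r * p (n + 1)

lemma aux_mean (γ r : ℝ) (p : ℕ → ℝ) (hp : Summable p)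
    (hm : Summable fun n : ℕ => (n : ℝ) * p n) :
    ∑' n : ℕ, (n : ℝ) * Lc γ r p n
      = r * (∑' n, p n) - (1 - γ) * ((∑' n, p n) - p 0) := by
  set M := ∑' n : ℕ, (n : ℝ) * p n with hM
  set S := ∑' n : ℕ, p n with hS
  have h1 : Summable (fun m : ℕ => p (m + 1)) := (summable_nat_add_iff 1).2 hp
  have h2 : Summable (fun m : ℕ => p (m + 2)) := (summable_nat_add_iff 2).2 hp
  have hm1 : Summable (fun m : ℕ => ((m : ℝ) + 1) * p (m + 1)) := by
    have := (summable_nat_add_iff 1).2 hm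
    apply this.congr; intro m; push_cast; ring
  have hm2 : Summable (fun m : ℕ => ((m : ℝ) + 2) * p (m + 2)) := by
    have := (summable_nat_add_iff 2).2 hm
    apply this.congr; intro m; push_cast; ring
  have hA : Summable (fun m : ℕ => ((m : ℝ) + 1) * p (m + 2)) := by
    apply (hm2.sub h2).congr; intro m; ring
  have hC : Summable (fun m : ℕ => ((m : ℝ) + 1) * p m) := by
    apply (hm.add hp).congr; intro m; ring
  -- values
  have eS1 : ∑' m : ℕ, p (m + 1) = S - p 0 := by
    have := Summable.tsum_eq_zero_add hp; rw [← hS] at this; linarith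
  have eS2 : ∑' m : ℕ, p (m + 2) = S - p 0 - p 1 := by
    have := Summable.tsum_eq_zero_add h1
    rw [eS1] at this; linarith
  have eB : ∑' m : ℕ, ((m : ℝ) + 1) * p (m + 1) = M := by
    have := Summable.tsum_eq_zero_add hm
    rw [← hM] at this
    have h' : ∑' m : ℕ, ((m : ℕ) + 1 : ℝ) * p (m + 1)
        = ∑' m : ℕ, ((m : ℝ) + 1) * p (m + 1) := by
      apply tsum_congr; intro m; push_cast; ring
    simp only [Nat.cast_zero, zero_mul, zero_add] at this
    rw [this]; apply tsum_congr; intro m; push_cast; ring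
  have eB2 : ∑' m : ℕ, ((m : ℝ) + 2) * p (m + 2) = M - p 1 := by
    have := Summable.tsum_eq_zero_add hm1
    rw [eB] at this
    have h' : ∑' m : ℕ, (((m : ℕ) + 1 : ℝ) + 1) * p (m + 1 + 1)
        = ∑' m : ℕ, ((m : ℝ) + 2) * p (m + 2) := by
      apply tsum_congr; intro m; push_cast; ring
    push_cast at this h'
    rw [h'] at this; linarith
  have eA : ∑' m : ℕ, ((m : ℝ) + 1) * p (m + 2) = M - p 1 - (S - p 0 - p 1) := by
    have : ∑' m : ℕ, (((m : ℝ) + 2) * p (m + 2) - p (m + 2))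
        = (M - p 1) - (S - p 0 - p 1) := by
      rw [Summable.tsum_sub hm2 h2, eB2, eS2]
    rw [← this]; apply tsum_congr; intro m; ring
  have eC : ∑' m : ℕ, ((m : ℝ) + 1) * p m = M + S := by
    have : ∑' m : ℕ, ((m : ℝ) * p m + p m) = M + S := by
      rw [Summable.tsum_add hm hp]
    rw [← this]; apply tsum_congr; intro m; ring
  -- summability of the main series
  have hg : Summable (fun m : ℕ => ((m : ℝ) + 1) *
      ((1 - γ) * p (m + 2) + r * p m - (1 - γ) * p (m + 1) - r * p (m + 1))) := by
    apply (((hA.mul_left (1 - γ)).add (hC.mul_left r)).sub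
      ((hm1.mul_left (1 - γ)).add (hm1.mul_left r))).congr
    intro m; ring
  have hf : Summable (fun n : ℕ => (n : ℝ) * Lc γ r p n) := by
    apply (summable_nat_add_iff 1).1
    apply hg.congr; intro m
    show ((m : ℝ) + 1) * _ = ((m + 1 : ℕ) : ℝ) * Lc γ r p (m + 1)
    simp only [Lc]; push_cast; ring
  rw [Summable.tsum_eq_zero_add hf]
  simp only [Nat.cast_zero, zero_mul, zero_add]
  have step : ∑' m : ℕ, ((m + 1 : ℕ) : ℝ) * Lc γ r p (m + 1)
      = ∑' m : ℕ, ((1 - γ) * (((m : ℝ) + 1) * p (m + 2)) + r * (((m : ℝ) + 1) * p m)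
        - ((1 - γ) * (((m : ℝ) + 1) * p (m + 1)) + r * (((m : ℝ) + 1) * p (m + 1)))) := by
    apply tsum_congr; intro m; simp only [Lc]; push_cast; ring
  rw [step, Summable.tsum_sub (((hA.mul_left (1 - γ)).add (hC.mul_left r)))
      ((hm1.mul_left (1 - γ)).add (hm1.mul_left r)),
    Summable.tsum_add (hA.mul_left (1 - γ)) (hC.mul_left r),
    Summable.tsum_add (hm1.mul_left (1 - γ)) (hm1.mul_left r),
    tsum_mul_left, tsum_mul_left, tsum_mul_left, tsum_mul_left, eA, eB, eC]
  ring

/-- conservation of the (weighted) mean value for the coupled mean-field system. -/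
theorem stmt_1 (γ nh : ℝ) (hγ : γ ∈ Set.Ioo (0 : ℝ) 1) (hnh : nh ∈ Set.Icc (0 : ℝ) 1)
    (ph pc : ℕ → ℝ) (hph0 : ∀ n, 0 ≤ ph n) (hpc0 : ∀ n, 0 ≤ pc n)
    (hph1 : (∑' n, ph n) = 1) (hpc1 : (∑' n, pc n) = 1)
    (hphm : Summable (fun n : ℕ => (n : ℝ) * ph n))
    (hpcm : Summable (fun n : ℕ => (n : ℝ) * pc n))
    (rh rc r : ℝ) (hrh : rh = ∑' n, ph (n + 1)) (hrc : rc = ∑' n, pc (n + 1))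
    (hr : r = (1 - nh) * rc * (1 - γ) + nh * rh) :
    nh * (∑' n : ℕ, (n : ℝ) * Lh r ph n) + (1 - nh) * (∑' n : ℕ, (n : ℝ) * Lc γ r pc n) = 0 := by
  have hps : Summable ph := by
    by_contra h; rw [tsum_eq_zero_of_not_summable h] at hph1; norm_num at hph1
  have hcs : Summable pc := by
    by_contra h; rw [tsum_eq_zero_of_not_summable h] at hpc1; norm_num at hpc1
  have hLhLc : (∑' n : ℕ, (n : ℝ) * Lh r ph n) = ∑' n : ℕ, (n : ℝ) * Lc 0 r ph n := by
    apply tsum_congr; intro n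
    cases n with
    | zero => simp [Lh, Lc]
    | succ m => simp only [Lh, Lc]; ring
  have e1 := aux_mean 0 r ph hps hphm
  have e2 := aux_mean γ r pc hcs hpcm
  rw [hph1] at e1; rw [hpc1] at e2
  have erh : rh = 1 - ph 0 := by
    rw [hrh]
    have := Summable.tsum_eq_zero_add hps
    rw [hph1] at this; linarith
  have erc : rc = 1 - pc 0 := by
    rw [hrc]
    have := Summable.tsum_eq_zero_add hcs
    rw [hpc1] at this; linarith
  rw [hLhLc, e1, e2, hr, erh, erc]
  ring
end

section
/- Let μ > 0, γ ∈ (0,1), n_h ∈ [0,1), and define r̄ = [ (2−γ)μ + (1−γ·n_h) − √( ((2−γ)μ + (1−γ·n_h))² − 4(1−γ)(μ+1)μ ) ] / (2(μ+1)). Then r̄ satisfies (μ+1)r̄² − [(2−γ)μ + (1−γ·n_h)]r̄ + (1−γ)μ = 0 and 0 < r̄ < 1−γ; moreover, if x is any real number with 0 < x < 1−γ and (μ+1)x² − [(2−γ)μ + (1−γ·n_h)]x + (1−γ)μ = 0, then x = r̄. -/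
/-- The equilibrium rate `r̄`. -/
noncomputable def rbar (μ γ nh : ℝ) : ℝ :=
  ((2 - γ) * μ + (1 - γ * nh) -
      Real.sqrt (((2 - γ) * μ + (1 - γ * nh)) ^ 2 - 4 * (1 - γ) * (μ + 1) * μ)) /
    (2 * (μ + 1))

/-- `r̄` is the unique root in `(0, 1−γ)` of the quadratic
`(μ+1)x² − [(2−γ)μ + (1−γ·n_h)]x + (1−γ)μ = 0`. -/
theorem stmt_3 (μ γ nh : ℝ) (hμ : 0 < μ) (hγ : γ ∈ Set.Ioo (0 : ℝ) 1)
    (hnh : nh ∈ Set.Ico (0 : ℝ) 1) :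
    ((μ + 1) * rbar μ γ nh ^ 2 - ((2 - γ) * μ + (1 - γ * nh)) * rbar μ γ nh + (1 - γ) * μ = 0) ∧
      (0 < rbar μ γ nh ∧ rbar μ γ nh < 1 - γ) ∧
      (∀ x : ℝ, 0 < x → x < 1 - γ →
        (μ + 1) * x ^ 2 - ((2 - γ) * μ + (1 - γ * nh)) * x + (1 - γ) * μ = 0 →
        x = rbar μ γ nh) := by
  obtain ⟨hγ0, hγ1⟩ := hγ
  obtain ⟨hnh0, hnh1⟩ := hnh
  have ha0 : (0:ℝ) < μ + 1 := by linarith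
  set b : ℝ := (2 - γ) * μ + (1 - γ * nh) with hbdef
  set D : ℝ := b ^ 2 - 4 * (1 - γ) * (μ + 1) * μ with hDdef
  set w : ℝ := 2 * (μ + 1) * (1 - γ) - b with hwdef
  have hP : 0 < 4 * (μ + 1) * (1 - γ) * γ * (1 - nh) := by
    have h1 : (0:ℝ) < 4 * (μ + 1) := by linarith
    have h2 : (0:ℝ) < 1 - γ := by linarith
    have h3 : (0:ℝ) < 1 - nh := by linarith
    exact mul_pos (mul_pos (mul_pos h1 h2) hγ0) h3
  have hDid : D = w ^ 2 + 4 * (μ + 1) * (1 - γ) * γ * (1 - nh) := by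
    rw [hDdef, hwdef, hbdef]; ring
  have hDpos : 0 < D := by
    rw [hDid]; nlinarith [sq_nonneg w]
  set s : ℝ := Real.sqrt D with hsdef
  have hs0 : 0 < s := Real.sqrt_pos.mpr hDpos
  have hs2 : s ^ 2 = D := Real.sq_sqrt hDpos.le
  have hb0 : 0 < b := by
    have : γ * nh < 1 := by nlinarith
    rw [hbdef]; nlinarith
  have hsb : s < b := by
    have hc : (0:ℝ) < 4 * (1 - γ) * (μ + 1) * μ := by
      have h2 : (0:ℝ) < 1 - γ := by linarith
      positivity
    have hsq : s ^ 2 < b ^ 2 := by rw [hs2, hDdef]; linarith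
    exact lt_of_pow_lt_pow_left₀ 2 hb0.le hsq
  have hws : w < s := by
    have hsq : w ^ 2 < s ^ 2 := by rw [hs2, hDid]; linarith
    exact lt_of_pow_lt_pow_left₀ 2 hs0.le hsq
  have hws' : -w < s := by
    have hsq : (-w) ^ 2 < s ^ 2 := by rw [hs2, hDid]; nlinarith
    exact lt_of_pow_lt_pow_left₀ 2 hs0.le hsq
  have hr : rbar μ γ nh = (b - s) / (2 * (μ + 1)) := by
    rw [rbar, hsdef, hDdef, hbdef]
  set r₂ : ℝ := (b + s) / (2 * (μ + 1)) with hr2def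
  have hane : (2 * (μ + 1)) ≠ 0 := by positivity
  have key : ∀ x : ℝ, (μ + 1) * x ^ 2 - b * x + (1 - γ) * μ
      = (μ + 1) * (x - (b - s) / (2 * (μ + 1))) * (x - r₂) := by
    intro x
    rw [hr2def]
    field_simp
    linear_combination hs2 + hDdef
  have hroot : (μ + 1) * rbar μ γ nh ^ 2 - b * rbar μ γ nh + (1 - γ) * μ = 0 := by
    rw [key, hr]; ring
  have hrpos : 0 < rbar μ γ nh := by
    rw [hr]
    exact div_pos (by linarith) (by positivity)
  have hr2gt : 1 - γ < r₂ := by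
    rw [hr2def, lt_div_iff₀ (by positivity : (0:ℝ) < 2 * (μ + 1))]
    rw [hwdef] at hws
    nlinarith
  have hrlt : rbar μ γ nh < 1 - γ := by
    rw [hr, div_lt_iff₀ (by positivity : (0:ℝ) < 2 * (μ + 1))]
    rw [hwdef] at hws'
    nlinarith
  refine ⟨hroot, ⟨hrpos, hrlt⟩, ?_⟩
  intro x hx0 hx1 hx
  rw [key] at hx
  rcases mul_eq_zero.mp hx with h | h
  · rcases mul_eq_zero.mp h with h' | h'
    · exact absurd h' (by positivity)
    · rw [hr]; linarith [sub_eq_zero.mp h']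
  · exfalso
    have : x = r₂ := sub_eq_zero.mp h
    linarith
end

section
/- Let μ > 0, γ ∈ (0,1), n_h ∈ [0,1), n_c = 1 − n_h, and let r̄, p̄^h, p̄^c be as defined. Then: (i) p̄^h and p̄^c are probability mass functions on ℕ (nonnegative with total sum 1); (ii) Σ_{n≥1} p̄^h_n = r̄ and Σ_{n≥1} p̄^c_n = r̄/(1−γ), so that the self-consistent rate r = n_c·(1−γ)·Σ_{n≥1} p̄^c_n + n_h·Σ_{n≥1} p̄^h_n equals r̄; (iii) n_h·Σ_{n≥0} n·p̄^h_n + n_c·Σ_{n≥0} n·p̄^c_n = μ; and (iv) L^h_{r̄}[p̄^h]_n = 0 and L^c_{r̄,γ}[p̄^c]_n = 0 for every n ∈ ℕ. -/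
/-- The equilibrium distribution of honest players: geometric with parameter `r̄`. -/
noncomputable def pbarh (μ γ nh : ℝ) (n : ℕ) : ℝ :=
  (1 - rbar μ γ nh) * rbar μ γ nh ^ n

/-- The equilibrium distribution of probabilistic cheaters: geometric with
parameter `r̄/(1−γ)`. -/
noncomputable def pbarc (μ γ nh : ℝ) (n : ℕ) : ℝ :=
  (1 - rbar μ γ nh / (1 - γ)) * (rbar μ γ nh / (1 - γ)) ^ n

lemma rbar_facts (μ γ nh : ℝ) (hμ : 0 < μ) (hγ : γ ∈ Set.Ioo (0 : ℝ) 1)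
    (hnh : nh ∈ Set.Ico (0 : ℝ) 1) :
    0 < rbar μ γ nh ∧ rbar μ γ nh < 1 - γ ∧
      (μ + 1) * rbar μ γ nh ^ 2 - ((2 - γ) * μ + (1 - γ * nh)) * rbar μ γ nh
        + (1 - γ) * μ = 0 := by
  obtain ⟨hγ0, hγ1⟩ := hγ
  obtain ⟨hnh0, hnh1⟩ := hnh
  have hDnn : 0 ≤ ((2 - γ) * μ + (1 - γ * nh)) ^ 2 - 4 * (1 - γ) * (μ + 1) * μ := by
    have hdec : ((2 - γ) * μ + (1 - γ * nh)) ^ 2 - 4 * (1 - γ) * (μ + 1) * μ =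
        (γ * μ - (1 - γ)) ^ 2 + 2 * ((2 - γ) * μ + (1 - γ)) * (γ * (1 - nh))
          + (γ * (1 - nh)) ^ 2 := by ring
    rw [hdec]
    have h1 : 0 ≤ 2 * ((2 - γ) * μ + (1 - γ)) * (γ * (1 - nh)) := by
      apply mul_nonneg
      · nlinarith
      · nlinarith
    positivity
  set t := Real.sqrt (((2 - γ) * μ + (1 - γ * nh)) ^ 2 - 4 * (1 - γ) * (μ + 1) * μ) with ht
  have ht0 : 0 ≤ t := Real.sqrt_nonneg _
  have ht2 : t ^ 2 = ((2 - γ) * μ + (1 - γ * nh)) ^ 2 - 4 * (1 - γ) * (μ + 1) * μ :=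
    Real.sq_sqrt hDnn
  have hBpos : 0 < (2 - γ) * μ + (1 - γ * nh) := by nlinarith
  have htB : t < (2 - γ) * μ + (1 - γ * nh) := by
    nlinarith [mul_pos (mul_pos (sub_pos.mpr hγ1) (by linarith : (0:ℝ) < μ + 1)) hμ]
  have hrb : rbar μ γ nh = ((2 - γ) * μ + (1 - γ * nh) - t) / (2 * (μ + 1)) := rfl
  have hden : (0:ℝ) < 2 * (μ + 1) := by linarith
  refine ⟨?_, ?_, ?_⟩
  · rw [hrb]; exact div_pos (by linarith) hden
  · rw [hrb, div_lt_iff₀ hden]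
    have hkey : ((2 - γ) * μ + (1 - γ * nh) - 2 * (μ + 1) * (1 - γ)) ^ 2 < t ^ 2 := by
      rw [ht2]
      nlinarith [mul_pos (mul_pos (mul_pos (by linarith : (0:ℝ) < μ+1)
        (by linarith : (0:ℝ) < 1-γ)) hγ0) (sub_pos.mpr hnh1)]
    nlinarith [hkey, ht0]
  · have hq : (μ + 1) * rbar μ γ nh ^ 2 - ((2 - γ) * μ + (1 - γ * nh)) * rbar μ γ nh
        + (1 - γ) * μ =
        (t ^ 2 - (((2 - γ) * μ + (1 - γ * nh)) ^ 2 - 4 * (1 - γ) * (μ + 1) * μ)) /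
          (4 * (μ + 1)) := by
      rw [hrb]; field_simp; ring
    rw [hq, ht2]; simp
lemma geom_facts (q : ℝ) (h0 : 0 ≤ q) (h1 : q < 1) :
    (∑' n : ℕ, (1 - q) * q ^ n) = 1 ∧
    (∑' n : ℕ, (1 - q) * q ^ (n + 1)) = q ∧
    (∑' n : ℕ, (n : ℝ) * ((1 - q) * q ^ n)) = q / (1 - q) := by
  have hne : (1 : ℝ) - q ≠ 0 := by linarith
  have hsum : (∑' n : ℕ, q ^ n) = (1 - q)⁻¹ := tsum_geometric_of_lt_one h0 h1
  have hmean : (∑' n : ℕ, (n : ℝ) * q ^ n) = q / (1 - q) ^ 2 :=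
    tsum_coe_mul_geometric_of_norm_lt_one (by rwa [Real.norm_eq_abs, abs_of_nonneg h0])
  refine ⟨?_, ?_, ?_⟩
  · rw [tsum_mul_left, hsum, mul_inv_cancel₀ hne]
  · have : (∑' n : ℕ, (1 - q) * q ^ (n + 1)) = ∑' n : ℕ, ((1 - q) * q) * q ^ n := by
      apply tsum_congr; intro n; ring
    rw [this, tsum_mul_left, hsum]
    field_simp
  · have : (∑' n : ℕ, (n : ℝ) * ((1 - q) * q ^ n)) =
        ∑' n : ℕ, (1 - q) * ((n : ℝ) * q ^ n) := by
      apply tsum_congr; intro n; ring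
    rw [this, tsum_mul_left, hmean]
    field_simp
/-- the pair `(p̄^h, p̄^c)` consists of probability mass functions, has the
correct busy fractions and mean, and is an equilibrium of the coupled mean-field system. -/
theorem stmt_5 (μ γ nh : ℝ) (hμ : 0 < μ) (hγ : γ ∈ Set.Ioo (0 : ℝ) 1)
    (hnh : nh ∈ Set.Ico (0 : ℝ) 1) :
    ((∀ n, 0 ≤ pbarh μ γ nh n) ∧ (∀ n, 0 ≤ pbarc μ γ nh n) ∧
      (∑' n, pbarh μ γ nh n) = 1 ∧ (∑' n, pbarc μ γ nh n) = 1) ∧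
    ((∑' n, pbarh μ γ nh (n + 1)) = rbar μ γ nh ∧
      (∑' n, pbarc μ γ nh (n + 1)) = rbar μ γ nh / (1 - γ) ∧
      (1 - nh) * (1 - γ) * (∑' n, pbarc μ γ nh (n + 1)) +
        nh * (∑' n, pbarh μ γ nh (n + 1)) = rbar μ γ nh) ∧
    (nh * (∑' n : ℕ, (n : ℝ) * pbarh μ γ nh n) +
      (1 - nh) * (∑' n : ℕ, (n : ℝ) * pbarc μ γ nh n) = μ) ∧
    ((∀ n, Lh (rbar μ γ nh) (pbarh μ γ nh) n = 0) ∧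
      (∀ n, Lc γ (rbar μ γ nh) (pbarc μ γ nh) n = 0)) := by
  obtain ⟨hr0, hr1γ, hquad⟩ := rbar_facts μ γ nh hμ hγ hnh
  obtain ⟨hγ0, hγ1⟩ := hγ
  obtain ⟨hnh0, hnh1⟩ := hnh
  set r := rbar μ γ nh with hrdef
  have hγne : (1 : ℝ) - γ ≠ 0 := by linarith
  have hr1 : r < 1 := by linarith
  have hs0 : 0 ≤ r / (1 - γ) := div_nonneg hr0.le (by linarith)
  have hs1 : r / (1 - γ) < 1 := (div_lt_one (by linarith)).mpr hr1γ
  obtain ⟨gh1, gh2, gh3⟩ := geom_facts r hr0.le hr1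
  obtain ⟨gc1, gc2, gc3⟩ := geom_facts (r / (1 - γ)) hs0 hs1
  have hrne : (1 : ℝ) - r ≠ 0 := by linarith
  have hrγne : (1 : ℝ) - γ - r ≠ 0 := by linarith
  refine ⟨⟨?_, ?_, ?_, ?_⟩, ⟨?_, ?_, ?_⟩, ?_, ?_, ?_⟩
  · intro n; unfold pbarh; exact mul_nonneg (by linarith) (pow_nonneg hr0.le n)
  · intro n; unfold pbarc
    exact mul_nonneg (by linarith) (pow_nonneg hs0 n)
  · simpa [pbarh] using gh1
  · simpa [pbarc] using gc1
  · simpa [pbarh] using gh2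
  · simpa [pbarc] using gc2
  · have e1 : (∑' n, pbarc μ γ nh (n + 1)) = r / (1 - γ) := by simpa [pbarc] using gc2
    have e2 : (∑' n, pbarh μ γ nh (n + 1)) = r := by simpa [pbarh] using gh2
    rw [e1, e2]; field_simp; ring
  · have e1 : (∑' n : ℕ, (n : ℝ) * pbarh μ γ nh n) = r / (1 - r) := by
      simpa [pbarh] using gh3
    have e2 : (∑' n : ℕ, (n : ℝ) * pbarc μ γ nh n) =
        (r / (1 - γ)) / (1 - r / (1 - γ)) := by simpa [pbarc] using gc3
    rw [e1, e2]
    have e3 : (r / (1 - γ)) / (1 - r / (1 - γ)) = r / (1 - γ - r) := by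
      rw [div_div, mul_sub, mul_one, mul_div_cancel₀ _ hγne]
    rw [e3]
    field_simp
    linear_combination -hquad
  · intro n
    match n with
    | 0 => simp only [Lh, pbarh]; ring
    | n + 1 => simp only [Lh, pbarh]; ring
  · intro n
    match n with
    | 0 => simp only [Lc, pbarc]; field_simp; ring
    | n + 1 =>
      simp only [Lc, pbarc, ← hrdef]
      have key : (1 - γ) * (r / (1 - γ)) = r := mul_div_cancel₀ _ hγne
      linear_combination (1 - r / (1 - γ)) * ((r / (1 - γ)) ^ (n + 1) - (r / (1 - γ)) ^ n) * key
end

section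
/- Let μ > 0, γ ∈ (0,1), n_h ∈ [0,1), n_c = 1 − n_h. Suppose f, g : ℕ → [0,∞) are probability mass functions on ℕ with finite means satisfying n_c·Σ_{n≥0} n·f_n + n_h·Σ_{n≥0} n·g_n = μ, and set r = n_c·(1−γ)·(1 − f_0) + n_h·(1 − g_0). If L^c_{r,γ}[f]_n = 0 and L^h_r[g]_n = 0 for every n ∈ ℕ, then r = r̄, g_n = (1−r̄)·r̄^n and f_n = (1 − r̄/(1−γ))·(r̄/(1−γ))^n for all n ∈ ℕ. -/
set_option maxHeartbeats 2000000 in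
/-- uniqueness of the equilibrium pair for the coupled mean-field system. -/
theorem stmt_6 (μ γ nh : ℝ) (hμ : 0 < μ) (hγ : γ ∈ Set.Ioo (0 : ℝ) 1)
    (hnh : nh ∈ Set.Ico (0 : ℝ) 1)
    (f g : ℕ → ℝ) (hf0 : ∀ n, 0 ≤ f n) (hg0 : ∀ n, 0 ≤ g n)
    (hf1 : (∑' n, f n) = 1) (hg1 : (∑' n, g n) = 1)
    (hfm : Summable (fun n : ℕ => (n : ℝ) * f n))
    (hgm : Summable (fun n : ℕ => (n : ℝ) * g n))
    (hmean : (1 - nh) * (∑' n : ℕ, (n : ℝ) * f n) + nh * (∑' n : ℕ, (n : ℝ) * g n) = μ)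
    (r : ℝ) (hr : r = (1 - nh) * (1 - γ) * (1 - f 0) + nh * (1 - g 0))
    (hfe : ∀ n, Lc γ r f n = 0) (hge : ∀ n, Lh r g n = 0) :
    r = rbar μ γ nh ∧ (∀ n, g n = (1 - rbar μ γ nh) * rbar μ γ nh ^ n) ∧
      (∀ n, f n = (1 - rbar μ γ nh / (1 - γ)) * (rbar μ γ nh / (1 - γ)) ^ n) := by
  obtain ⟨hγ0, hγ1⟩ := hγ
  obtain ⟨hnh0, hnh1⟩ := hnh
  have h1γ : (0:ℝ) < 1 - γ := by linarith
  set q : ℝ := r / (1 - γ) with hq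
  have hr1γ : (1 - γ) * q = r := by rw [hq]; field_simp [h1γ.ne']
  -- recurrences
  have hgrec : ∀ n, g (n+1) = r * g n := by
    intro n
    induction n with
    | zero =>
      have h := hge 0; simp only [Lh] at h; linarith
    | succ k ih =>
      have h := hge (k+1); simp only [Lh] at h; linarith
  have hfrec : ∀ n, (1 - γ) * f (n+1) = r * f n := by
    intro n
    induction n with
    | zero =>
      have h := hfe 0; simp only [Lc] at h; linarith
    | succ k ih =>
      have h := hfe (k+1); simp only [Lc] at h; linear_combination h + ih
  -- closed forms
  have hgeo_g : ∀ n, g n = g 0 * r ^ n := by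
    intro n
    induction n with
    | zero => simp
    | succ k ih => rw [hgrec k, ih]; ring
  have hgeo_f : ∀ n, f n = f 0 * q ^ n := by
    intro n
    induction n with
    | zero => simp
    | succ k ih =>
      apply mul_left_cancel₀ (ne_of_gt h1γ)
      have h := hfrec k
      rw [ih] at h
      rw [h, ← hr1γ]; ring
  -- summability
  have hsf : Summable f := by
    by_contra h
    rw [tsum_eq_zero_of_not_summable h] at hf1
    norm_num at hf1
  have hsg : Summable g := by
    by_contra h
    rw [tsum_eq_zero_of_not_summable h] at hg1
    norm_num at hg1
  -- positivity of initial values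
  have hf0pos : 0 < f 0 := by
    rcases (hf0 0).lt_or_eq with h | h
    · exact h
    · exfalso
      have hz : ∀ n, f n = 0 := fun n => by rw [hgeo_f n, ← h, zero_mul]
      rw [tsum_congr hz, tsum_zero] at hf1
      norm_num at hf1
  have hg0pos : 0 < g 0 := by
    rcases (hg0 0).lt_or_eq with h | h
    · exact h
    · exfalso
      have hz : ∀ n, g n = 0 := fun n => by rw [hgeo_g n, ← h, zero_mul]
      rw [tsum_congr hz, tsum_zero] at hg1
      norm_num at hg1
  -- bounds
  have hf0le : f 0 ≤ 1 := by
    calc f 0 ≤ ∑' n, f n := Summable.le_tsum hsf 0 (fun j _ => hf0 j)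
    _ = 1 := hf1
  have hg0le : g 0 ≤ 1 := by
    calc g 0 ≤ ∑' n, g n := Summable.le_tsum hsg 0 (fun j _ => hg0 j)
    _ = 1 := hg1
  have hrnn : 0 ≤ r := by
    rw [hr]
    have h1 : 0 ≤ (1 - nh) * (1 - γ) * (1 - f 0) :=
      mul_nonneg (mul_nonneg (by linarith) (by linarith)) (by linarith)
    have h2 : 0 ≤ nh * (1 - g 0) := mul_nonneg hnh0 (by linarith)
    linarith
  have hQ0 : 0 ≤ q := div_nonneg hrnn h1γ.le
  -- ratio bounds from summability
  have hQ1 : q < 1 := by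
    have hs : Summable (fun n : ℕ => q ^ n) := by
      have := (summable_congr hgeo_f).mp hsf
      exact (summable_mul_left_iff (ne_of_gt hf0pos)).mp this
    have := summable_geometric_iff_norm_lt_one.mp hs
    rwa [Real.norm_eq_abs, abs_of_nonneg hQ0] at this
  have hR1 : r < 1 := by
    have hs : Summable (fun n : ℕ => r ^ n) := by
      have := (summable_congr hgeo_g).mp hsg
      exact (summable_mul_left_iff (ne_of_gt hg0pos)).mp this
    have := summable_geometric_iff_norm_lt_one.mp hs
    rwa [Real.norm_eq_abs, abs_of_nonneg hrnn] at this
  have h1q : (0:ℝ) < 1 - q := by linarith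
  have h1r : (0:ℝ) < 1 - r := by linarith
  -- initial values from total mass
  have hf0eq : f 0 = 1 - q := by
    have h := hf1
    rw [tsum_congr hgeo_f, tsum_mul_left, tsum_geometric_of_lt_one hQ0 hQ1] at h
    field_simp [h1q.ne'] at h
    linarith
  have hg0eq : g 0 = 1 - r := by
    have h := hg1
    rw [tsum_congr hgeo_g, tsum_mul_left, tsum_geometric_of_lt_one hrnn hR1] at h
    field_simp [h1r.ne'] at h
    linarith
  -- means
  have hnQ : ‖q‖ < 1 := by rwa [Real.norm_eq_abs, abs_of_nonneg hQ0]
  have hnR : ‖r‖ < 1 := by rwa [Real.norm_eq_abs, abs_of_nonneg hrnn]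
  have hmf : (∑' n : ℕ, (n : ℝ) * f n) = f 0 * (q / (1 - q) ^ 2) := by
    rw [tsum_congr (fun n => by rw [hgeo_f n]; ring :
        ∀ n : ℕ, (n : ℝ) * f n = f 0 * ((n : ℝ) * q ^ n)),
      tsum_mul_left, tsum_coe_mul_geometric_of_norm_lt_one hnQ]
  have hmg : (∑' n : ℕ, (n : ℝ) * g n) = g 0 * (r / (1 - r) ^ 2) := by
    rw [tsum_congr (fun n => by rw [hgeo_g n]; ring :
        ∀ n : ℕ, (n : ℝ) * g n = g 0 * ((n : ℝ) * r ^ n)),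
      tsum_mul_left, tsum_coe_mul_geometric_of_norm_lt_one hnR]
  rw [hmf, hmg, hf0eq, hg0eq] at hmean
  have hrlt : r < 1 - γ := by nlinarith [hr1γ]
  have h1γr : (0:ℝ) < 1 - γ - r := by linarith
  -- the quadratic equation for r
  have hquad : (μ + 1) * r ^ 2 - ((2 - γ) * μ + (1 - γ * nh)) * r + (1 - γ) * μ = 0 := by
    have e1 : (1 - q) * (q / (1 - q) ^ 2) = r / (1 - γ - r) := by
      rw [hq]
      field_simp
    have e2 : (1 - r) * (r / (1 - r) ^ 2) = r / (1 - r) := by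
      field_simp
    rw [e1, e2] at hmean
    field_simp [h1γr.ne', h1r.ne'] at hmean
    linear_combination -hmean
  have hb : 2 * (μ + 1) * r < (2 - γ) * μ + (1 - γ * nh) := by
    by_contra h
    push_neg at h
    have inner : (0:ℝ) < (μ + 1) * ((1 - γ) + r) - ((2 - γ) * μ + (1 - γ * nh)) := by
      nlinarith [mul_pos (show (0:ℝ) < μ + 1 by linarith) h1γr]
    have key := mul_pos h1γr inner
    nlinarith [key, hquad, mul_pos (mul_pos hγ0 h1γ) (show (0:ℝ) < 1 - nh by linarith)]
  have hD : ((2 - γ) * μ + (1 - γ * nh)) ^ 2 - 4 * (1 - γ) * (μ + 1) * μ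
      = ((2 - γ) * μ + (1 - γ * nh) - 2 * (μ + 1) * r) ^ 2 := by
    linear_combination (-4 * (μ + 1)) * hquad
  have hrbar : rbar μ γ nh = r := by
    unfold rbar
    rw [hD, Real.sqrt_sq (by linarith)]
    field_simp
    ring
  refine ⟨hrbar.symm, fun n => ?_, fun n => ?_⟩
  · rw [hgeo_g n, hg0eq, hrbar]
  · rw [hgeo_f n, hf0eq, hrbar, ← hq]
end

section
/- Let γ ∈ (0,1), r > 0, and let p : ℕ → (0,∞) be a probability mass function such that Σ_{n≥0} p_n·|log p_n| < ∞, Σ_{n≥0} p_{n+1}·|log p_n| < ∞ and Σ_{n≥0} p_n·|log p_{n+1}| < ∞. Then Σ_{n≥0} L^h_r[p]_n·log p_n = −Σ_{n≥0} (p_{n+1} − r·p_n)·log( p_{n+1}/(r·p_n) ) + (r − r_h)·log r, where r_h = Σ_{n≥1} p_n = 1 − p_0. -/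
/-- Auxiliary sequence. -/
noncomputable def eAux (r : ℝ) (p : ℕ → ℝ) : ℕ → ℝ
  | 0 => 0
  | n + 1 => r * (p n * Real.log (p (n + 1))) - p (n + 1) * Real.log (p (n + 1))

/-- entropy-production identity for the honest-player operator. -/
theorem stmt_8 (γ r : ℝ) (hγ : γ ∈ Set.Ioo (0 : ℝ) 1) (hr : 0 < r)
    (p : ℕ → ℝ) (hp0 : ∀ n, 0 < p n) (hp1 : (∑' n, p n) = 1)
    (h1 : Summable (fun n : ℕ => p n * |Real.log (p n)|))
    (h2 : Summable (fun n : ℕ => p (n + 1) * |Real.log (p n)|))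
    (h3 : Summable (fun n : ℕ => p n * |Real.log (p (n + 1))|)) :
    (∑' n, Lh r p n * Real.log (p n)) =
      -(∑' n, (p (n + 1) - r * p n) * Real.log (p (n + 1) / (r * p n))) +
        (r - (1 - p 0)) * Real.log r := by
  have hsp : Summable p := by
    by_contra h
    rw [tsum_eq_zero_of_not_summable h] at hp1
    norm_num at hp1
  have hd : Summable (fun n => p n * Real.log (p n)) := by
    refine summable_abs_iff.mp (h1.congr fun n => ?_)
    rw [abs_mul, abs_of_pos (hp0 n)]
  have hb : Summable (fun n => p (n + 1) * Real.log (p n)) := by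
    refine summable_abs_iff.mp (h2.congr fun n => ?_)
    rw [abs_mul, abs_of_pos (hp0 (n + 1))]
  have hc : Summable (fun n => p n * Real.log (p (n + 1))) := by
    refine summable_abs_iff.mp (h3.congr fun n => ?_)
    rw [abs_mul, abs_of_pos (hp0 n)]
  have ha : Summable (fun n => p (n + 1) * Real.log (p (n + 1))) :=
    (summable_nat_add_iff 1).mpr hd
  have hsp1 : Summable (fun n => p (n + 1)) := (summable_nat_add_iff 1).mpr hsp
  have htp1 : (∑' n, p (n + 1)) = 1 - p 0 := by
    have h := Summable.tsum_eq_zero_add hsp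
    rw [hp1] at h
    linarith
  have he : Summable (eAux r p) := by
    have h' : Summable (fun n => eAux r p (n + 1)) := by
      refine ((hc.mul_left r).sub ha).congr fun n => ?_
      simp [eAux]
    exact (summable_nat_add_iff 1).mp h'
  have hLeq : (∑' n, Lh r p n * Real.log (p n)) =
      (∑' n, (p (n + 1) * Real.log (p n) - r * (p n * Real.log (p n)))) +
        ∑' n, eAux r p n := by
    rw [← Summable.tsum_add (hb.sub (hd.mul_left r)) he]
    refine tsum_congr fun n => ?_
    cases n with
    | zero => simp only [Lh, eAux]; ring
    | succ n => simp only [Lh, eAux]; ring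
  have he_tsum : (∑' n, eAux r p n) =
      r * (∑' n, p n * Real.log (p (n + 1))) - ∑' n, p (n + 1) * Real.log (p (n + 1)) := by
    rw [Summable.tsum_eq_zero_add he]
    simp only [eAux]
    rw [Summable.tsum_sub (hc.mul_left r) ha, tsum_mul_left]
    ring
  have htsub : (∑' n, (p (n + 1) * Real.log (p n) - r * (p n * Real.log (p n)))) =
      (∑' n, p (n + 1) * Real.log (p n)) - r * ∑' n, p n * Real.log (p n) := by
    rw [Summable.tsum_sub hb (hd.mul_left r), tsum_mul_left]
  have hg : ∀ n, (p (n + 1) - r * p n) * Real.log (p (n + 1) / (r * p n)) =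
      (p (n + 1) * Real.log (p (n + 1)) - p (n + 1) * Real.log (p n)
        - r * (p n * Real.log (p (n + 1))) + r * (p n * Real.log (p n)))
        - (p (n + 1) - r * p n) * Real.log r := by
    intro n
    rw [Real.log_div (hp0 (n + 1)).ne' (mul_pos hr (hp0 n)).ne',
      Real.log_mul hr.ne' (hp0 n).ne']
    ring
  have hsum4 : Summable (fun n => p (n + 1) * Real.log (p (n + 1))
      - p (n + 1) * Real.log (p n) - r * (p n * Real.log (p (n + 1)))
      + r * (p n * Real.log (p n))) :=
    ((ha.sub hb).sub (hc.mul_left r)).add (hd.mul_left r)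
  have hsumc : Summable (fun n => (p (n + 1) - r * p n) * Real.log r) :=
    (hsp1.sub (hsp.mul_left r)).mul_right _
  have hRHS : (∑' n, (p (n + 1) - r * p n) * Real.log (p (n + 1) / (r * p n))) =
      ((∑' n, p (n + 1) * Real.log (p (n + 1))) - (∑' n, p (n + 1) * Real.log (p n))
        - r * (∑' n, p n * Real.log (p (n + 1))) + r * (∑' n, p n * Real.log (p n)))
        - ((1 - p 0) - r * 1) * Real.log r := by
    rw [tsum_congr hg, Summable.tsum_sub hsum4 hsumc]
    rw [Summable.tsum_add ((ha.sub hb).sub (hc.mul_left r)) (hd.mul_left r),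
      Summable.tsum_sub (ha.sub hb) (hc.mul_left r), Summable.tsum_sub ha hb, tsum_mul_left, tsum_mul_left]
    rw [tsum_mul_right, Summable.tsum_sub hsp1 (hsp.mul_left r), tsum_mul_left, htp1, hp1]
  rw [hLeq, he_tsum, htsub, hRHS]
  ring
end

section
/- Let γ ∈ (0,1), r ∈ ℝ, and let p : ℕ → [0,∞) be a probability mass function on ℕ with finite mean Σ_{n≥0} n·p_n < ∞. Then Σ_{n≥0} n·L^h_r[p]_n = r − (1 − p_0) and Σ_{n≥0} n·L^c_{r,γ}[p]_n = r − (1−γ)·(1 − p_0). -/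
lemma key_tsum (a r : ℝ) (p : ℕ → ℝ) (hp0 : ∀ n, 0 ≤ p n)
    (hp : Summable p) (hp1 : (∑' n, p n) = 1)
    (hpm : Summable (fun n : ℕ => (n : ℝ) * p n)) :
    (∑' n : ℕ, (a * ((n : ℝ) * p (n + 1)) + r * ((n : ℝ) * p (n - 1))
      - (a + r) * ((n : ℝ) * p n))) = r - a * (1 - p 0) := by
  set T := ∑' n : ℕ, (n : ℝ) * p n with hT
  have hg : Summable (fun n : ℕ => ((n : ℝ) + 1) * p n) :=
    (hpm.add hp).congr (fun n => by ring)
  -- summability of n * p (n+1)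
  have hS1' : Summable (fun n : ℕ => (((n : ℝ) + 1) + 1) * p (n + 1)) := by
    have := (summable_nat_add_iff 1).2 hg
    exact this.congr (fun n => by push_cast; ring)
  have hS1 : Summable (fun n : ℕ => (n : ℝ) * p (n + 1)) := by
    refine Summable.of_nonneg_of_le (fun n => mul_nonneg (Nat.cast_nonneg n) (hp0 _))
      (fun n => ?_) hS1'
    have := hp0 (n + 1)
    nlinarith
  -- summability of n * p (n-1)
  have hS2 : Summable (fun n : ℕ => (n : ℝ) * p (n - 1)) := by
    refine (summable_nat_add_iff 1).mp ?_
    exact hg.congr (fun n => by push_cast; simp)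
  have hp_shift : Summable (fun n : ℕ => p (n + 1)) := (summable_nat_add_iff 1).2 hp
  -- tsum of shifted p
  have e1 : (∑' n : ℕ, p (n + 1)) = 1 - p 0 := by
    have := Summable.tsum_eq_zero_add hp
    rw [hp1] at this; linarith
  -- tsum of (n+1) * p (n+1)
  have e2 : (∑' n : ℕ, ((n : ℝ) + 1) * p (n + 1)) = T := by
    have h := Summable.tsum_eq_zero_add hpm
    simp only [Nat.cast_zero, zero_mul, zero_add, Nat.cast_add, Nat.cast_one] at h
    rw [← hT] at h
    exact h.symm
  -- tsum of n * p (n+1)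
  have e3 : (∑' n : ℕ, (n : ℝ) * p (n + 1)) = T - (1 - p 0) := by
    have h : (∑' n : ℕ, ((n : ℝ) * p (n + 1) + p (n + 1)))
        = (∑' n : ℕ, (n : ℝ) * p (n + 1)) + (∑' n : ℕ, p (n + 1)) :=
      Summable.tsum_add hS1 hp_shift
    have h2 : (∑' n : ℕ, ((n : ℝ) * p (n + 1) + p (n + 1))) = T := by
      rw [← e2]; exact tsum_congr fun n => by ring
    rw [e1] at h; linarith
  -- tsum of n * p (n-1)
  have e4 : (∑' n : ℕ, (n : ℝ) * p (n - 1)) = T + 1 := by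
    have h := Summable.tsum_eq_zero_add hS2
    have h2 : (∑' n : ℕ, ((n + 1 : ℕ) : ℝ) * p ((n + 1) - 1))
        = (∑' n : ℕ, ((n : ℝ) * p n + p n)) :=
      tsum_congr fun n => by simp only [Nat.add_sub_cancel]; push_cast; ring
    rw [Summable.tsum_add hpm hp, hp1, ← hT] at h2
    rw [h2] at h
    simpa using h
  rw [Summable.tsum_sub ((hS1.mul_left a).add (hS2.mul_left r)) (hpm.mul_left (a + r)),
    Summable.tsum_add (hS1.mul_left a) (hS2.mul_left r), tsum_mul_left, tsum_mul_left,
    tsum_mul_left, e3, e4, ← hT]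
  ring

/-- rate of change of the mean under each operator. -/
theorem stmt_10 (γ r : ℝ) (hγ : γ ∈ Set.Ioo (0 : ℝ) 1)
    (p : ℕ → ℝ) (hp0 : ∀ n, 0 ≤ p n) (hp1 : (∑' n, p n) = 1)
    (hpm : Summable (fun n : ℕ => (n : ℝ) * p n)) :
    (∑' n : ℕ, (n : ℝ) * Lh r p n) = r - (1 - p 0) ∧
      (∑' n : ℕ, (n : ℝ) * Lc γ r p n) = r - (1 - γ) * (1 - p 0) := by
  have hp : Summable p := by
    by_contra h
    rw [tsum_eq_zero_of_not_summable h] at hp1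
    norm_num at hp1
  constructor
  · have h := key_tsum 1 r p hp0 hp hp1 hpm
    have h2 : (∑' n : ℕ, (n : ℝ) * Lh r p n)
        = ∑' n : ℕ, (1 * ((n : ℝ) * p (n + 1)) + r * ((n : ℝ) * p (n - 1))
          - (1 + r) * ((n : ℝ) * p n)) := by
      refine tsum_congr fun n => ?_
      cases n with
      | zero => simp [Lh]
      | succ m => simp only [Lh, Nat.add_sub_cancel]; push_cast; ring
    rw [h2, h]; ring
  · have h := key_tsum (1 - γ) r p hp0 hp hp1 hpm
    have h2 : (∑' n : ℕ, (n : ℝ) * Lc γ r p n)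
        = ∑' n : ℕ, ((1 - γ) * ((n : ℝ) * p (n + 1)) + r * ((n : ℝ) * p (n - 1))
          - ((1 - γ) + r) * ((n : ℝ) * p n)) := by
      refine tsum_congr fun n => ?_
      cases n with
      | zero => simp [Lc]
      | succ m => simp only [Lc, Nat.add_sub_cancel]; push_cast; ring
    rw [h2, h]
end

section
/- Let μ > 0, γ ∈ (0,1), n_h ∈ (0,1), n_c = 1 − n_h, and let r̄, p̄^h, p̄^c be as defined. Let f, g : ℕ → (0,∞) be positive probability mass functions on ℕ with finite means satisfying n_c·Σ_{n≥0} n·f_n + n_h·Σ_{n≥0} n·g_n = μ, and set r = n_c·(1−γ)·(1 − f_0) + n_h·(1 − g_0). If the entropy production D := (1−γ)·n_c·Σ_{n≥0} ( f_{n+1} − r·f_n/(1−γ) )·log( f_{n+1}/( r·f_n/(1−γ) ) ) + n_h·Σ_{n≥0} ( g_{n+1} − r·g_n )·log( g_{n+1}/( r·g_n ) ) equals 0, then r = r̄, f_n = p̄^c_n and g_n = p̄^h_n for all n ∈ ℕ. -/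
lemma ent_key {a b : ℝ} (ha : 0 < a) (hb : 0 < b)
    (h : (a - b) * Real.log (a / b) ≤ 0) : a = b := by
  rcases lt_trichotomy a b with h1 | h1 | h1
  · exfalso
    have hl : Real.log (a / b) < 0 := Real.log_neg (div_pos ha hb) ((div_lt_one hb).2 h1)
    nlinarith
  · exact h1
  · exfalso
    have hl : 0 < Real.log (a / b) := Real.log_pos ((one_lt_div hb).2 h1)
    nlinarith

lemma geom_pmf (p : ℕ → ℝ) (hp : ∀ n, 0 < p n) (h1 : (∑' n, p n) = 1) (c : ℝ) (hc : 0 < c)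
    (hrec : ∀ n, p (n + 1) = c * p n) :
    c < 1 ∧ (∀ n, p n = (1 - c) * c ^ n) ∧ (∑' n : ℕ, (n : ℝ) * p n) = c / (1 - c) := by
  have hS : Summable p := by
    by_contra h
    rw [tsum_eq_zero_of_not_summable h] at h1
    norm_num at h1
  have hgeo : ∀ n, p n = p 0 * c ^ n := by
    intro n
    induction n with
    | zero => simp
    | succ n ih => rw [hrec n, ih, pow_succ]; ring
  have hsg : Summable (fun n : ℕ => c ^ n) := by
    have h2 : Summable (fun n : ℕ => p 0 * c ^ n) := hS.congr hgeo
    exact (summable_mul_left_iff (hp 0).ne').mp h2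
  have hc1 : c < 1 := by
    have := summable_geometric_iff_norm_lt_one.mp hsg
    rw [Real.norm_eq_abs, abs_of_pos hc] at this
    exact this
  have h1c : (0:ℝ) < 1 - c := by linarith
  have htsum : p 0 * (1 - c)⁻¹ = 1 := by
    rw [← tsum_geometric_of_lt_one hc.le hc1, ← tsum_mul_left, ← tsum_congr hgeo, h1]
  have hp0 : p 0 = 1 - c := by
    field_simp at htsum
    linarith
  refine ⟨hc1, fun n => by rw [hgeo n, hp0], ?_⟩
  have hmean : (∑' n : ℕ, (n : ℝ) * p n) = (1 - c) * (c / (1 - c) ^ 2) := by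
    rw [← tsum_coe_mul_geometric_of_norm_lt_one
      (by rw [Real.norm_eq_abs, abs_of_pos hc]; exact hc1), ← tsum_mul_left]
    apply tsum_congr
    intro n
    rw [hgeo n, hp0]; ring
  rw [hmean]
  field_simp

/-- vanishing of the (possibly infinite) entropy production forces the pair
`(f, g)` to coincide with the equilibrium `(p̄^c, p̄^h)`. The entropy production is expressed
as a sum of nonnegative terms in `ℝ≥0∞`, so that it is allowed to be infinite. -/
theorem stmt_12 (μ γ nh : ℝ) (hμ : 0 < μ) (hγ : γ ∈ Set.Ioo (0 : ℝ) 1)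
    (hnh : nh ∈ Set.Ioo (0 : ℝ) 1)
    (f g : ℕ → ℝ) (hf : ∀ n, 0 < f n) (hg : ∀ n, 0 < g n)
    (hf1 : (∑' n, f n) = 1) (hg1 : (∑' n, g n) = 1)
    (hfm : Summable (fun n : ℕ => (n : ℝ) * f n))
    (hgm : Summable (fun n : ℕ => (n : ℝ) * g n))
    (hmean : (1 - nh) * (∑' n : ℕ, (n : ℝ) * f n) + nh * (∑' n : ℕ, (n : ℝ) * g n) = μ)
    (r : ℝ) (hr : r = (1 - nh) * (1 - γ) * (1 - f 0) + nh * (1 - g 0))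
    (hD : ENNReal.ofReal ((1 - γ) * (1 - nh)) *
            (∑' n, ENNReal.ofReal
              ((f (n + 1) - r * f n / (1 - γ)) * Real.log (f (n + 1) / (r * f n / (1 - γ))))) +
          ENNReal.ofReal nh *
            (∑' n, ENNReal.ofReal
              ((g (n + 1) - r * g n) * Real.log (g (n + 1) / (r * g n)))) = 0) :
    r = rbar μ γ nh ∧ (∀ n, f n = pbarc μ γ nh n) ∧ (∀ n, g n = pbarh μ γ nh n) := by
  obtain ⟨hγ0, hγ1⟩ := hγ
  obtain ⟨hnh0, hnh1⟩ := hnh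
  have h1γ : (0:ℝ) < 1 - γ := by linarith
  have h1nh : (0:ℝ) < 1 - nh := by linarith
  -- summability of f and g
  have hFs : Summable f := by
    by_contra h; rw [tsum_eq_zero_of_not_summable h] at hf1; norm_num at hf1
  have hGs : Summable g := by
    by_contra h; rw [tsum_eq_zero_of_not_summable h] at hg1; norm_num at hg1
  -- f 0 < 1 and g 0 < 1
  have hf0lt : f 0 < 1 := by
    have h := Summable.sum_le_tsum (Finset.range 2) (fun i _ => (hf i).le) hFs
    rw [hf1] at h
    simp [Finset.sum_range_succ] at h
    have := hf 1; linarith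
  have hg0lt : g 0 < 1 := by
    have h := Summable.sum_le_tsum (Finset.range 2) (fun i _ => (hg i).le) hGs
    rw [hg1] at h
    simp [Finset.sum_range_succ] at h
    have := hg 1; linarith
  -- r > 0
  have hrpos : 0 < r := by
    rw [hr]
    have h1 := mul_pos (mul_pos h1nh h1γ) (by linarith : (0:ℝ) < 1 - f 0)
    have h2 := mul_pos hnh0 (by linarith : (0:ℝ) < 1 - g 0)
    linarith
  -- extract the recursions from hD
  obtain ⟨hD1, hD2⟩ := add_eq_zero.mp hD
  have ht1 : (∑' n, ENNReal.ofReal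
      ((f (n + 1) - r * f n / (1 - γ)) * Real.log (f (n + 1) / (r * f n / (1 - γ))))) = 0 :=
    (mul_eq_zero.mp hD1).resolve_left (ENNReal.ofReal_pos.2 (by nlinarith)).ne'
  have ht2 : (∑' n, ENNReal.ofReal
      ((g (n + 1) - r * g n) * Real.log (g (n + 1) / (r * g n)))) = 0 :=
    (mul_eq_zero.mp hD2).resolve_left (ENNReal.ofReal_pos.2 hnh0).ne'
  have hfe : ∀ n, f (n + 1) = r / (1 - γ) * f n := by
    intro n
    have h0 := ENNReal.tsum_eq_zero.mp ht1 n
    rw [ENNReal.ofReal_eq_zero] at h0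
    have := ent_key (hf (n + 1)) (div_pos (mul_pos hrpos (hf n)) h1γ) h0
    rw [this]; ring
  have hge : ∀ n, g (n + 1) = r * g n := by
    intro n
    have h0 := ENNReal.tsum_eq_zero.mp ht2 n
    rw [ENNReal.ofReal_eq_zero] at h0
    exact ent_key (hg (n + 1)) (mul_pos hrpos (hg n)) h0
  -- geometric structure
  have hq0 : 0 < r / (1 - γ) := div_pos hrpos h1γ
  obtain ⟨hq1, hfgeo, hfmean⟩ := geom_pmf f hf hf1 _ hq0 hfe
  obtain ⟨hr1, hggeo, hgmean⟩ := geom_pmf g hg hg1 r hrpos hge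
  have hrlt : r < 1 - γ := (div_lt_one h1γ).mp hq1
  have h1q : (0:ℝ) < 1 - r / (1 - γ) := by linarith
  have h1r : (0:ℝ) < 1 - r := by linarith
  -- the quadratic equation
  have hmean' : (1 - nh) * (r / (1 - γ) / (1 - r / (1 - γ))) + nh * (r / (1 - r)) = μ := by
    rw [← hfmean, ← hgmean]; exact hmean
  have hquad : (μ + 1) * r ^ 2 - ((2 - γ) * μ + (1 - γ * nh)) * r + (1 - γ) * μ = 0 := by
    have h1 : (1:ℝ) - γ - r ≠ 0 := by linarith
    have h2 : (1:ℝ) - r ≠ 0 := by linarith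
    field_simp at hmean'
    nlinarith [hmean']
  set B : ℝ := (2 - γ) * μ + (1 - γ * nh) with hB
  -- r is the smaller root
  have hfact : (1 - γ - r) * ((μ + 1) * (1 - γ + r) - B) = -(1 - γ) * γ * (1 - nh) := by
    rw [hB]; linear_combination (-1:ℝ) * hquad
  have step1 : (μ + 1) * (1 - γ + r) < B := by
    by_contra h
    push_neg at h
    have h2 : 0 ≤ (1 - γ - r) * ((μ + 1) * (1 - γ + r) - B) :=
      mul_nonneg (by linarith) (by linarith)
    nlinarith [hfact, mul_pos (mul_pos h1γ hγ0) h1nh]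
  have step2 : 0 < B - 2 * (μ + 1) * r := by
    nlinarith [step1, mul_pos (show (0:ℝ) < μ + 1 by linarith)
      (show (0:ℝ) < 1 - γ - r by linarith)]
  have hdisc : B ^ 2 - 4 * (1 - γ) * (μ + 1) * μ = (B - 2 * (μ + 1) * r) ^ 2 := by
    linear_combination (-4 * (μ + 1)) * hquad
  have hrbar : rbar μ γ nh = r := by
    rw [rbar, ← hB, hdisc, Real.sqrt_sq step2.le]
    have hμ1 : (2:ℝ) * (μ + 1) ≠ 0 := by positivity
    field_simp
    ring
  refine ⟨hrbar.symm, ?_, ?_⟩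
  · intro n; rw [pbarc, hrbar]; exact hfgeo n
  · intro n; rw [pbarh, hrbar]; exact hggeo n
end

section
/- Let r ∈ (0,1) and let p_n = (1−r)·r^n for n ∈ ℕ (the geometric distribution with parameter r). Let y : ℕ → ℝ satisfy Σ_{n≥0} |y_n| < ∞, Σ_{n≥0} n·|y_n| < ∞, Σ_{n≥0} y_n = 0 and Σ_{n≥0} n·y_n = 0, and suppose Σ_{n≥0} y_n²/p_n < ∞. Then y_0² ≤ (1−r)·r²·Σ_{n≥0} y_n²/p_n. -/
set_option maxHeartbeats 800000

open Real

private lemma cs_tsum (f g : ℕ → ℝ) (hf : Summable (fun n => f n ^ 2))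
    (hg : Summable (fun n => g n ^ 2)) :
    (∑' n, f n * g n) ^ 2 ≤ (∑' n, f n ^ 2) * (∑' n, g n ^ 2) := by
  have habs : Summable (fun n => |f n * g n|) := by
    apply Summable.of_nonneg_of_le (fun n => abs_nonneg _) (fun n => ?_)
      ((hf.add hg).div_const 2)
    rw [abs_mul]
    nlinarith [sq_nonneg (|f n| - |g n|), sq_abs (f n), sq_abs (g n),
      abs_nonneg (f n), abs_nonneg (g n)]
  have hfg : Summable (fun n => f n * g n) := habs.of_abs
  have h1 : |∑' n, f n * g n| ≤ ∑' n, |f n * g n| := by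
    have hn : Summable (fun n => ‖f n * g n‖) := by
      simpa only [Real.norm_eq_abs] using habs
    have := norm_tsum_le_tsum_norm hn
    simpa only [Real.norm_eq_abs] using this
  have h2 : ∑' n, |f n * g n| ≤ √(∑' n, f n ^ 2) * √(∑' n, g n ^ 2) := by
    apply Summable.tsum_le_of_sum_le habs
    intro s
    calc ∑ i ∈ s, |f i * g i| = ∑ i ∈ s, |f i| * |g i| := by
          simp [abs_mul]
      _ ≤ √(∑ i ∈ s, |f i| ^ 2) * √(∑ i ∈ s, |g i| ^ 2) :=
          Real.sum_mul_le_sqrt_mul_sqrt s _ _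
      _ = √(∑ i ∈ s, f i ^ 2) * √(∑ i ∈ s, g i ^ 2) := by simp [sq_abs]
      _ ≤ √(∑' n, f n ^ 2) * √(∑' n, g n ^ 2) := by
          gcongr
          · exact Summable.sum_le_tsum s (fun i _ => sq_nonneg _) hf
          · exact Summable.sum_le_tsum s (fun i _ => sq_nonneg _) hg
  have h3 : |∑' n, f n * g n| ≤ √(∑' n, f n ^ 2) * √(∑' n, g n ^ 2) := h1.trans h2
  calc (∑' n, f n * g n) ^ 2 = |∑' n, f n * g n| ^ 2 := (sq_abs _).symm
    _ ≤ (√(∑' n, f n ^ 2) * √(∑' n, g n ^ 2)) ^ 2 :=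
        pow_le_pow_left₀ (abs_nonneg _) h3 2
    _ = (∑' n, f n ^ 2) * (∑' n, g n ^ 2) := by
        rw [mul_pow, Real.sq_sqrt (tsum_nonneg fun n => sq_nonneg _),
          Real.sq_sqrt (tsum_nonneg fun n => sq_nonneg _)]

private lemma tsum_sq_geom {r : ℝ} (h0 : 0 < r) (h1 : r < 1) :
    ∑' n : ℕ, (n : ℝ) ^ 2 * r ^ n = r * (1 + r) / (1 - r) ^ 3 := by
  have hr : ‖r‖ < 1 := by rw [Real.norm_eq_abs, abs_of_pos h0]; exact h1
  have hC : Summable (fun n : ℕ => (n : ℝ) ^ 2 * r ^ n) :=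
    summable_pow_mul_geometric_of_norm_lt_one 2 hr
  have hB : Summable (fun n : ℕ => (n : ℝ) * r ^ n) := by
    simpa using summable_pow_mul_geometric_of_norm_lt_one 1 hr
  have hA : Summable (fun n : ℕ => r ^ n) := summable_geometric_of_lt_one h0.le h1
  have hq : (1 : ℝ) - r ≠ 0 := by linarith
  set C := ∑' n : ℕ, (n : ℝ) ^ 2 * r ^ n with hCdef
  have hBval : ∑' n : ℕ, (n : ℝ) * r ^ n = r / (1 - r) ^ 2 :=
    tsum_coe_mul_geometric_of_norm_lt_one hr
  have hAval : ∑' n : ℕ, r ^ n = (1 - r)⁻¹ := tsum_geometric_of_lt_one h0.le h1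
  have key : C = r * C + 2 * r * (r / (1 - r) ^ 2) + r * (1 - r)⁻¹ := by
    have h0' := Summable.tsum_eq_zero_add hC
    have hcongr : ∑' n : ℕ, ((↑(n + 1) : ℝ)) ^ 2 * r ^ (n + 1) =
        ∑' n : ℕ, (r * ((n : ℝ) ^ 2 * r ^ n) + (2 * r * ((n : ℝ) * r ^ n)
          + r * r ^ n)) := by
      apply tsum_congr; intro n; push_cast; ring
    rw [hcongr, Summable.tsum_add (hC.mul_left r) ((hB.mul_left (2 * r)).add (hA.mul_left r)),
      Summable.tsum_add (hB.mul_left (2 * r)) (hA.mul_left r),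
      tsum_mul_left, tsum_mul_left, tsum_mul_left, hBval, hAval] at h0'
    rw [← hCdef] at h0'
    linarith
  have key3 : C - r * C = 2 * r * (r / (1 - r) ^ 2) + r * (1 - r)⁻¹ := by linarith
  have ht : (2 * r * (r / (1 - r) ^ 2) + r * (1 - r)⁻¹) * (1 - r) ^ 2 = r * (1 + r) := by
    field_simp
    ring
  rw [eq_div_iff (by positivity)]
  calc C * (1 - r) ^ 3 = (C - r * C) * (1 - r) ^ 2 := by ring
    _ = (2 * r * (r / (1 - r) ^ 2) + r * (1 - r)⁻¹) * (1 - r) ^ 2 := by rw [key3]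
    _ = r * (1 + r) := ht

/-- weighted Cauchy–Schwarz estimate for a geometric distribution
`p_n = (1−r)·rⁿ`: if `y` has vanishing total mass and vanishing first moment, then
`y₀² ≤ (1−r)·r²·Σ yₙ²/pₙ`. -/
theorem stmt_13 (r : ℝ) (hr : r ∈ Set.Ioo (0 : ℝ) 1) (y : ℕ → ℝ)
    (h1 : Summable (fun n : ℕ => |y n|))
    (h2 : Summable (fun n : ℕ => (n : ℝ) * |y n|))
    (h3 : (∑' n, y n) = 0) (h4 : (∑' n : ℕ, (n : ℝ) * y n) = 0)
    (h5 : Summable (fun n : ℕ => y n ^ 2 / ((1 - r) * r ^ n))) :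
    y 0 ^ 2 ≤ (1 - r) * r ^ 2 * (∑' n : ℕ, y n ^ 2 / ((1 - r) * r ^ n)) := by
  obtain ⟨hr0, hr1⟩ := hr
  have hq0 : (0 : ℝ) < 1 - r := by linarith
  have hrn : ‖r‖ < 1 := by rw [Real.norm_eq_abs, abs_of_pos hr0]; exact hr1
  have hp : ∀ n : ℕ, 0 < (1 - r) * r ^ n := fun n => mul_pos hq0 (pow_pos hr0 n)
  set c : ℕ → ℝ := fun n => (if n = 0 then 1 else 0) + (r ^ 2 - 1) + (1 - r) ^ 2 * n
    with hc
  set f : ℕ → ℝ := fun n => c n * √((1 - r) * r ^ n) with hfdef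
  set g : ℕ → ℝ := fun n => y n / √((1 - r) * r ^ n) with hgdef
  have hsq : ∀ n, √((1 - r) * r ^ n) ^ 2 = (1 - r) * r ^ n :=
    fun n => Real.sq_sqrt (hp n).le
  have hsqne : ∀ n, √((1 - r) * r ^ n) ≠ 0 := fun n => (Real.sqrt_pos.mpr (hp n)).ne'
  have hfg : ∀ n, f n * g n = c n * y n := by
    intro n
    rw [hfdef, hgdef]
    field_simp
  have hf2 : ∀ n, f n ^ 2 = c n ^ 2 * ((1 - r) * r ^ n) := by
    intro n; rw [hfdef]; simp only []; rw [mul_pow, hsq]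
  have hg2 : ∀ n, g n ^ 2 = y n ^ 2 / ((1 - r) * r ^ n) := by
    intro n; rw [hgdef]; simp only []; rw [div_pow, hsq]
  -- summable basics
  have hy : Summable y := h1.of_abs
  have hny : Summable (fun n : ℕ => (n : ℝ) * y n) := by
    apply Summable.of_abs
    apply h2.congr
    intro n
    rw [abs_mul, Nat.abs_cast]
  -- Step A: ∑' c n * y n = y 0
  have hcy_pt : (fun n => c n * y n) = (fun n : ℕ =>
      (if n = 0 then y 0 else 0) + ((r ^ 2 - 1) * y n + (1 - r) ^ 2 * ((n : ℝ) * y n))) := by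
    funext n
    rcases n with _ | m
    · simp [hc]; ring
    · simp [hc]; ring
  have hyS : HasSum y 0 := h3 ▸ hy.hasSum
  have hnyS : HasSum (fun n : ℕ => (n : ℝ) * y n) 0 := h4 ▸ hny.hasSum
  have hcyS : HasSum (fun n => c n * y n) (y 0) := by
    rw [hcy_pt]
    have h := (hasSum_ite_eq (0 : ℕ) (y 0)).add
      ((hyS.mul_left (r ^ 2 - 1)).add (hnyS.mul_left ((1 - r) ^ 2)))
    simpa using h
  -- Step B: sum of f^2
  have hf2_pt : (fun n => f n ^ 2) = (fun n : ℕ =>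
      (if n = 0 then (2 * r ^ 2 - 1) * (1 - r) else 0) +
      ((1 - r) * (r ^ 2 - 1) ^ 2 * r ^ n +
       ((1 - r) * (2 * (r ^ 2 - 1) * (1 - r) ^ 2) * ((n : ℝ) * r ^ n) +
        (1 - r) * (1 - r) ^ 4 * ((n : ℝ) ^ 2 * r ^ n)))) := by
    funext n
    rw [hf2 n]
    rcases n with _ | m
    · simp [hc]; ring
    · simp [hc]; push_cast; ring
  have hAS : HasSum (fun n : ℕ => r ^ n) (1 - r)⁻¹ :=
    hasSum_geometric_of_lt_one hr0.le hr1
  have hBS : HasSum (fun n : ℕ => (n : ℝ) * r ^ n) (r / (1 - r) ^ 2) :=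
    hasSum_coe_mul_geometric_of_norm_lt_one hrn
  have hCsummable : Summable (fun n : ℕ => (n : ℝ) ^ 2 * r ^ n) :=
    summable_pow_mul_geometric_of_norm_lt_one 2 hrn
  have hCS : HasSum (fun n : ℕ => (n : ℝ) ^ 2 * r ^ n) (r * (1 + r) / (1 - r) ^ 3) := by
    have := hCsummable.hasSum
    rwa [tsum_sq_geom hr0 hr1] at this
  have hFS : HasSum (fun n => f n ^ 2)
      ((2 * r ^ 2 - 1) * (1 - r) +
       ((1 - r) * (r ^ 2 - 1) ^ 2 * (1 - r)⁻¹ +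
        ((1 - r) * (2 * (r ^ 2 - 1) * (1 - r) ^ 2) * (r / (1 - r) ^ 2) +
         (1 - r) * (1 - r) ^ 4 * (r * (1 + r) / (1 - r) ^ 3)))) := by
    rw [hf2_pt]
    exact (hasSum_ite_eq (0 : ℕ) _).add ((hAS.mul_left _).add
      ((hBS.mul_left _).add (hCS.mul_left _)))
  have hTval : (2 * r ^ 2 - 1) * (1 - r) +
      ((1 - r) * (r ^ 2 - 1) ^ 2 * (1 - r)⁻¹ +
       ((1 - r) * (2 * (r ^ 2 - 1) * (1 - r) ^ 2) * (r / (1 - r) ^ 2) +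
        (1 - r) * (1 - r) ^ 4 * (r * (1 + r) / (1 - r) ^ 3))) = (1 - r) * r ^ 2 := by
    field_simp
    ring
  have hFS' : HasSum (fun n => f n ^ 2) ((1 - r) * r ^ 2) := hTval ▸ hFS
  -- g^2 summable
  have hGsummable : Summable (fun n => g n ^ 2) := h5.congr (fun n => (hg2 n).symm)
  -- Cauchy-Schwarz
  have hCS2 := cs_tsum f g hFS'.summable hGsummable
  rw [tsum_congr hfg, hcyS.tsum_eq, hFS'.tsum_eq, tsum_congr hg2] at hCS2
  exact hCS2
end

section
/- Let r ∈ (0,1) and let p_n = (1−r)·r^n for n ∈ ℕ. Let w : ℕ → ℝ satisfy Σ_{n≥0} |w_n| < ∞, Σ_{n≥0} n·|w_n| < ∞, Σ_{n≥0} w_n = 0, and suppose Σ_{n≥1} (w_n − w_{n−1})²/p_{n−1} < ∞. Then w_0² ≤ ( r/(1+r) )·Σ_{n≥1} (w_n − w_{n−1})²/p_{n−1}. -/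
open Filter Finset

/-- Cauchy–Schwarz inequality for infinite sums. -/
lemma tsum_cs_aux {f g : ℕ → ℝ} (hf : Summable (fun n => f n ^ 2))
    (hg : Summable (fun n => g n ^ 2)) (hfg : Summable (fun n => f n * g n)) :
    (∑' n, f n * g n) ^ 2 ≤ (∑' n, f n ^ 2) * (∑' n, g n ^ 2) := by
  have hT : Tendsto (fun N => (∑ i ∈ range N, f i * g i) ^ 2) atTop
      (nhds ((∑' n, f n * g n) ^ 2)) := hfg.hasSum.tendsto_sum_nat.pow 2
  refine le_of_tendsto' hT (fun N => ?_)
  calc (∑ i ∈ range N, f i * g i) ^ 2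
      ≤ (∑ i ∈ range N, f i ^ 2) * (∑ i ∈ range N, g i ^ 2) :=
        Finset.sum_mul_sq_le_sq_mul_sq _ _ _
    _ ≤ (∑' n, f n ^ 2) * (∑' n, g n ^ 2) := by
        apply mul_le_mul (Summable.sum_le_tsum _ (fun i _ => sq_nonneg _) hf)
          (Summable.sum_le_tsum _ (fun i _ => sq_nonneg _) hg)
          (Finset.sum_nonneg (fun i _ => sq_nonneg _))
          (tsum_nonneg (fun i => sq_nonneg _))

/-- weighted estimate for increments against a geometric distribution
`p_n = (1−r)·rⁿ`: if `w` has vanishing total mass, then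
`w₀² ≤ (r/(1+r))·Σ_{n≥1} (wₙ − w_{n−1})²/p_{n−1}`. -/
theorem stmt_14 (r : ℝ) (hr : r ∈ Set.Ioo (0 : ℝ) 1) (w : ℕ → ℝ)
    (h1 : Summable (fun n : ℕ => |w n|))
    (h2 : Summable (fun n : ℕ => (n : ℝ) * |w n|))
    (h3 : (∑' n, w n) = 0)
    (h4 : Summable (fun n : ℕ => (w (n + 1) - w n) ^ 2 / ((1 - r) * r ^ n))) :
    w 0 ^ 2 ≤ r / (1 + r) * (∑' n : ℕ, (w (n + 1) - w n) ^ 2 / ((1 - r) * r ^ n)) := by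
  obtain ⟨hr0, hr1⟩ := hr
  have h1r : (0:ℝ) < 1 - r := by linarith
  have h1r' : (0:ℝ) < 1 + r := by linarith
  set l : ℝ := -(1 - r) / (1 + r) with hl
  set d : ℕ → ℝ := fun n => w (n + 1) - w n with hd
  set p : ℕ → ℝ := fun n => (1 - r) * r ^ n with hp
  set a : ℕ → ℝ := fun n => 1 + l * ((n : ℝ) + 1) with ha
  have hppos : ∀ n, 0 < p n := fun n => mul_pos h1r (pow_pos hr0 n)
  -- basic summability
  have hw : Summable w := h1.of_abs
  have hw' : Summable (fun n => w (n + 1)) := (summable_nat_add_iff 1).2 hw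
  have hdsum : Summable d := hw'.sub hw
  -- summability of (n+1) * d n
  have sum_a : Summable (fun n : ℕ => ((n : ℝ) + 1) * |w (n + 1)|) := by
    have := (summable_nat_add_iff (f := fun n : ℕ => (n : ℝ) * |w n|) 1).2 h2
    convert this using 2 with n
    · rfl
    push_cast
    ring
  have sum_b : Summable (fun n : ℕ => ((n : ℝ) + 1) * |w n|) := by
    convert h2.add h1 using 2 with n
    ring
  have hndsum : Summable (fun n : ℕ => ((n : ℝ) + 1) * d n) := by
    apply Summable.of_abs
    apply (sum_a.add sum_b).of_nonneg_of_le (fun n => abs_nonneg _)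
    intro n
    have hn : (0:ℝ) ≤ (n : ℝ) + 1 := by positivity
    calc |((n : ℝ) + 1) * d n| = ((n : ℝ) + 1) * |w (n + 1) - w n| := by
          rw [abs_mul, abs_of_nonneg hn]
      _ ≤ ((n : ℝ) + 1) * (|w (n + 1)| + |w n|) := by
          apply mul_le_mul_of_nonneg_left (abs_sub _ _) hn
      _ = ((n : ℝ) + 1) * |w (n + 1)| + ((n : ℝ) + 1) * |w n| := by ring
  -- limits
  have hw0 : Tendsto w atTop (nhds 0) := hw.tendsto_atTop_zero
  have hnw0 : Tendsto (fun n : ℕ => (n : ℝ) * w n) atTop (nhds 0) := by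
    refine squeeze_zero_norm (fun n => ?_) h2.tendsto_atTop_zero
    rw [Real.norm_eq_abs, abs_mul, Nat.abs_cast]
  -- HasSum d (-w 0)
  have Hd : HasSum d (-w 0) := by
    rw [hdsum.hasSum_iff_tendsto_nat]
    have : (fun N => ∑ i ∈ range N, d i) = fun N => w N - w 0 := by
      ext N; exact Finset.sum_range_sub w N
    rw [this]
    simpa using hw0.sub_const (w 0)
  -- HasSum ((n+1) d n) 0
  have Hnd : HasSum (fun n : ℕ => ((n : ℝ) + 1) * d n) 0 := by
    rw [hndsum.hasSum_iff_tendsto_nat]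
    have key : ∀ N : ℕ, ∑ i ∈ range N, ((i : ℝ) + 1) * d i
        = (N : ℝ) * w N - ∑ i ∈ range N, w i := by
      intro N
      induction N with
      | zero => simp
      | succ N ih =>
          rw [Finset.sum_range_succ, ih, Finset.sum_range_succ]
          simp only [hd]
          push_cast
          ring
    simp only [key]
    have hsw : Tendsto (fun N => ∑ i ∈ range N, w i) atTop (nhds 0) := by
      have := hw.hasSum.tendsto_sum_nat
      rwa [h3] at this
    simpa using hnw0.sub hsw
  -- HasSum (d * a) (-w 0)
  have Hda : HasSum (fun n => d n * a n) (-w 0) := by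
    have := Hd.add (Hnd.mul_left l)
    have heq : (fun n => d n + l * (((n : ℝ) + 1) * d n)) = fun n => d n * a n := by
      ext n; simp only [ha]; ring
    rw [heq] at this
    simpa using this
  -- geometric sums
  have hrabs : ‖r‖ < 1 := by rw [Real.norm_eq_abs, abs_of_pos hr0]; exact hr1
  have G0 : HasSum (fun n : ℕ => r ^ n) (1 / (1 - r)) := by
    simpa [one_div] using hasSum_geometric_of_lt_one hr0.le hr1
  have G1 : HasSum (fun n : ℕ => ((n : ℝ) + 1) * r ^ n) (1 / (1 - r) ^ 2) := by
    have := hasSum_choose_mul_geometric_of_norm_lt_one (𝕜 := ℝ) 1 hrabs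
    convert this using 2 with n
    · rfl
    simp
  have G2 : HasSum (fun n : ℕ => ((n : ℝ) + 1) ^ 2 * r ^ n) ((1 + r) / (1 - r) ^ 3) := by
    have C2 := hasSum_choose_mul_geometric_of_norm_lt_one (𝕜 := ℝ) 2 hrabs
    have := (C2.mul_left 2).sub G1
    have hcast : ∀ n : ℕ, (((n + 2).choose 2 : ℕ) : ℝ) = ((n : ℝ) + 1) * ((n : ℝ) + 2) / 2 := by
      intro n
      have h2dvd : 2 * ((n + 2).choose 2) = (n + 1) * (n + 2) := by
        rw [Nat.choose_two_right]
        have heven : Even ((n + 1) * (n + 2)) := by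
          have := Nat.even_mul_succ_self (n + 1)
          simpa [Nat.succ_eq_add_one, add_assoc] using this
        have h21 : n + 2 - 1 = n + 1 := rfl
        rw [h21, Nat.mul_comm (n + 2) (n + 1), Nat.mul_div_cancel' heven.two_dvd]
      have := congrArg (fun m : ℕ => (m : ℝ)) h2dvd
      push_cast at this
      linarith
    have heq : (fun n : ℕ => 2 * ((((n + 2).choose 2 : ℕ) : ℝ) * r ^ n) - ((n : ℝ) + 1) * r ^ n)
        = fun n : ℕ => ((n : ℝ) + 1) ^ 2 * r ^ n := by
      ext n; rw [hcast n]; ring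
    rw [heq] at this
    convert this using 1
    · rfl
    field_simp
    ring
  -- HasSum of p * a^2
  have HT : HasSum (fun n => p n * a n ^ 2) (r / (1 + r)) := by
    have := (((G0.add (G1.mul_left (2 * l))).add (G2.mul_left (l ^ 2))).mul_left (1 - r))
    have heq : (fun n : ℕ => (1 - r) * (r ^ n + 2 * l * (((n : ℝ) + 1) * r ^ n)
        + l ^ 2 * (((n : ℝ) + 1) ^ 2 * r ^ n))) = fun n => p n * a n ^ 2 := by
      ext n; simp only [hp, ha]; ring
    rw [heq] at this
    convert this using 1
    · rfl
    rw [hl]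
    field_simp
    ring
  -- set up Cauchy–Schwarz
  set f : ℕ → ℝ := fun n => d n / Real.sqrt (p n) with hf
  set g : ℕ → ℝ := fun n => Real.sqrt (p n) * a n with hg
  have hsq : ∀ n, Real.sqrt (p n) ^ 2 = p n := fun n => Real.sq_sqrt (hppos n).le
  have hsne : ∀ n, Real.sqrt (p n) ≠ 0 := fun n => ne_of_gt (Real.sqrt_pos.2 (hppos n))
  have hf2 : (fun n => f n ^ 2) = fun n : ℕ => (w (n + 1) - w n) ^ 2 / ((1 - r) * r ^ n) := by
    ext n; simp only [hf, hd, hp]; rw [div_pow, hsq n]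
  have hg2 : (fun n => g n ^ 2) = fun n => p n * a n ^ 2 := by
    ext n; simp only [hg]; rw [mul_pow, hsq n]
  have hfg : (fun n => f n * g n) = fun n => d n * a n := by
    ext n; simp only [hf, hg]
    rw [div_mul_eq_mul_div, div_eq_iff (hsne n)]
    ring
  have hf2s : Summable (fun n => f n ^ 2) := by rw [hf2]; exact h4
  have hg2s : Summable (fun n => g n ^ 2) := by rw [hg2]; exact HT.summable
  have hfgs : Summable (fun n => f n * g n) := by rw [hfg]; exact Hda.summable
  have key := tsum_cs_aux hf2s hg2s hfgs
  rw [hf2, hg2, hfg, Hda.tsum_eq, HT.tsum_eq] at key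
  calc w 0 ^ 2 = (-w 0) ^ 2 := by ring
    _ ≤ (∑' n : ℕ, (w (n + 1) - w n) ^ 2 / ((1 - r) * r ^ n)) * (r / (1 + r)) := key
    _ = r / (1 + r) * (∑' n : ℕ, (w (n + 1) - w n) ^ 2 / ((1 - r) * r ^ n)) := mul_comm _ _
end

section
/- Let μ > 0, γ ∈ (0,1), n_h ∈ (0,1), n_c = 1 − n_h, and let r̄, p̄^h, p̄^c be as defined. Let w^c, w^h : ℕ → ℝ satisfy Σ_{n≥0} |w^c_n| < ∞, Σ_{n≥0} |w^h_n| < ∞, Σ_{n≥0} n·|w^c_n| < ∞, Σ_{n≥0} n·|w^h_n| < ∞, Σ_{n≥0} w^c_n = 0 and Σ_{n≥0} w^h_n = 0, and set r_w = −n_c·(1−γ)·w^c_0 − n_h·w^h_0. Assuming Σ_{n≥0} (w^h_{n+1} − w^h_n)²/p̄^h_n < ∞ and Σ_{n≥0} (w^c_{n+1} − w^c_n)²/p̄^c_n < ∞, it holds that n_h·(w^h_0)² + n_c·(1−γ)·(w^c_0)² + r_w²/r̄ ≤ n_h·Σ_{n≥0} (w^h_{n+1} − w^h_n)²/p̄^h_n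 + n_c·(1−γ)·Σ_{n≥0} (w^c_{n+1} − w^c_n)²/p̄^c_n. -/
lemma rbar_bounds (μ γ nh : ℝ) (hμ : 0 < μ) (hγ0 : 0 < γ) (hγ1 : γ < 1)
    (hnh0 : 0 < nh) (hnh1 : nh < 1) :
    0 < rbar μ γ nh ∧ rbar μ γ nh < 1 - γ := by
  have hB : 0 < (2 - γ) * μ + (1 - γ * nh) := by nlinarith
  have hC : 0 < 4 * (1 - γ) * (μ + 1) * μ :=
    mul_pos (mul_pos (mul_pos (by norm_num) (by linarith)) (by linarith)) hμ
  set B := (2 - γ) * μ + (1 - γ * nh) with hBdef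
  set Dd := B ^ 2 - 4 * (1 - γ) * (μ + 1) * μ with hDdef
  have hsq : Real.sqrt Dd < B := by
    rw [Real.sqrt_lt' hB]
    simp only [hDdef]; linarith
  have ha : (0:ℝ) < 2 * (μ + 1) := by linarith
  have hrb : rbar μ γ nh = (B - Real.sqrt Dd) / (2 * (μ + 1)) := rfl
  constructor
  · rw [hrb]
    exact div_pos (by linarith) ha
  · rw [hrb, div_lt_iff₀ ha]
    have hgoal : B - 2 * (μ + 1) * (1 - γ) < Real.sqrt Dd := by
      rcases lt_or_ge (B - 2 * (μ + 1) * (1 - γ)) 0 with h | h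
      · have := Real.sqrt_nonneg Dd; linarith
      · refine Real.lt_sqrt_of_sq_lt ?_
        have hid : Dd - (B - 2 * (μ + 1) * (1 - γ)) ^ 2
            = 4 * (μ + 1) * ((1 - γ) * (γ * (1 - nh))) := by
          simp only [hDdef, hBdef]; ring
        have hpos : 0 < 4 * (μ + 1) * ((1 - γ) * (γ * (1 - nh))) := by
          apply mul_pos (by linarith) (mul_pos (by linarith) (mul_pos hγ0 (by linarith)))
        linarith
    linarith

set_option maxHeartbeats 1000000 in
lemma key_lemma (r : ℝ) (hr0 : 0 < r) (hr1 : r < 1) (w : ℕ → ℝ)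
    (h1 : Summable (fun n : ℕ => |w n|))
    (h3 : Summable (fun n : ℕ => (n : ℝ) * |w n|))
    (h5 : (∑' n, w n) = 0)
    (hD : Summable (fun n : ℕ => (w (n + 1) - w n) ^ 2 / ((1 - r) * r ^ n))) :
    (1 + r) / r * w 0 ^ 2 ≤ ∑' n : ℕ, (w (n + 1) - w n) ^ 2 / ((1 - r) * r ^ n) := by
  have hr1' : (0:ℝ) < 1 - r := by linarith
  have hrne : r ≠ 0 := ne_of_gt hr0
  have h1rne : (1 : ℝ) - r ≠ 0 := ne_of_gt hr1'
  have hw : Summable w := summable_abs_iff.mp h1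
  have hnw : Summable (fun n : ℕ => (n : ℝ) * w n) := by
    rw [← summable_abs_iff]
    refine h3.congr fun n => ?_
    rw [abs_mul, Nat.abs_cast]
  have hw1 : Summable (fun n : ℕ => w (n + 1)) := (summable_nat_add_iff 1).2 hw
  have sum_w1 : (∑' n : ℕ, w (n + 1)) = -w 0 := by
    have h0 := Summable.tsum_eq_zero_add hw
    rw [h5] at h0; linarith
  -- d and its sums
  have hd_s : Summable (fun n : ℕ => w (n + 1) - w n) := hw1.sub hw
  have sum_d : (∑' n : ℕ, (w (n + 1) - w n)) = -w 0 := by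
    rw [Summable.tsum_sub hw1 hw, sum_w1, h5]; ring
  have hs1 : Summable (fun n : ℕ => ((n : ℝ) + 1) * w (n + 1)) := by
    have := (summable_nat_add_iff (f := fun n : ℕ => (n : ℝ) * w n) 1).2 hnw
    refine this.congr fun n => ?_
    push_cast; ring
  have hnw1 : Summable (fun n : ℕ => (n : ℝ) * w (n + 1)) := by
    have h := hs1.sub hw1
    refine h.congr fun n => ?_
    ring
  have sum_s1 : (∑' n : ℕ, ((n : ℝ) + 1) * w (n + 1)) = ∑' n : ℕ, (n : ℝ) * w n := by
    have h0 := Summable.tsum_eq_zero_add hnw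
    push_cast at h0
    simpa using h0.symm
  have sum_nw1 : (∑' n : ℕ, (n : ℝ) * w (n + 1)) = (∑' n : ℕ, (n : ℝ) * w n) + w 0 := by
    have h := Summable.tsum_sub hs1 hw1
    have heq : (fun n : ℕ => ((n : ℝ) + 1) * w (n + 1) - w (n + 1))
        = fun n : ℕ => (n : ℝ) * w (n + 1) := by funext n; ring
    rw [heq] at h
    rw [h, sum_s1, sum_w1]; ring
  have hnd : Summable (fun n : ℕ => (n : ℝ) * (w (n + 1) - w n)) := by
    have h := hnw1.sub hnw
    refine h.congr fun n => ?_
    ring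
  have sum_nd : (∑' n : ℕ, (n : ℝ) * (w (n + 1) - w n)) = w 0 := by
    have heq : (fun n : ℕ => (n : ℝ) * (w (n + 1) - w n))
        = fun n : ℕ => (n : ℝ) * w (n + 1) - (n : ℝ) * w n := by funext n; ring
    rw [heq, Summable.tsum_sub hnw1 hnw, sum_nw1]; ring
  -- geometric sums
  have hnorm : ‖r‖ < 1 := by rw [Real.norm_eq_abs, abs_of_pos hr0]; exact hr1
  have sg0 : Summable (fun n : ℕ => r ^ n) := summable_geometric_of_lt_one hr0.le hr1
  have sg1 : Summable (fun n : ℕ => (n : ℝ) * r ^ n) := by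
    have := summable_pow_mul_geometric_of_norm_lt_one (R := ℝ) 1 hnorm
    simpa using this
  have sg2 : Summable (fun n : ℕ => (n : ℝ) ^ 2 * r ^ n) :=
    summable_pow_mul_geometric_of_norm_lt_one 2 hnorm
  have S0 : (∑' n : ℕ, r ^ n) = (1 - r)⁻¹ := tsum_geometric_of_lt_one hr0.le hr1
  have S1 : (∑' n : ℕ, (n : ℝ) * r ^ n) = r / (1 - r) ^ 2 :=
    tsum_coe_mul_geometric_of_norm_lt_one hnorm
  have S2 : (∑' n : ℕ, (n : ℝ) ^ 2 * r ^ n) = r * (1 + r) / (1 - r) ^ 3 := by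
    have h0 := Summable.tsum_eq_zero_add sg2
    have heq : (fun n : ℕ => ((n + 1 : ℕ) : ℝ) ^ 2 * r ^ (n + 1))
        = fun n : ℕ => r * ((n : ℝ) ^ 2 * r ^ n) + (2 * r * ((n : ℝ) * r ^ n) + r * r ^ n) := by
      funext n; push_cast; ring
    rw [heq, Summable.tsum_add (sg2.mul_left r) ((sg1.mul_left (2 * r)).add (sg0.mul_left r)),
      Summable.tsum_add (sg1.mul_left (2 * r)) (sg0.mul_left r), tsum_mul_left, tsum_mul_left,
      tsum_mul_left] at h0
    rw [S1, S0] at h0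
    have hS2 : (∑' n : ℕ, (n : ℝ) ^ 2 * r ^ n) * (1 - r) = 2 * r * (r / (1 - r) ^ 2) + r * (1 - r)⁻¹ := by
      push_cast at h0
      linarith [h0]
    field_simp at hS2 ⊢
    nlinarith [hS2]
  -- abbreviations
  set c : ℝ := 2 * r / (1 - r) with hc
  set lam : ℝ := w 0 * (1 - r) / r with hlam
  -- Dirichlet form bound via Cauchy-Schwarz
  have hadp : Summable (fun n : ℕ => ((n : ℝ) - c) ^ 2 * ((1 - r) * r ^ n)) := by
    have h := ((sg2.mul_left (1 - r)).sub (sg1.mul_left (2 * c * (1 - r)))).add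
      (sg0.mul_left (c ^ 2 * (1 - r)))
    refine h.congr fun n => ?_
    ring
  have Mval : (∑' n : ℕ, ((n : ℝ) - c) ^ 2 * ((1 - r) * r ^ n)) = r * (1 + r) / (1 - r) ^ 2 := by
    have heq : (fun n : ℕ => ((n : ℝ) - c) ^ 2 * ((1 - r) * r ^ n))
        = fun n : ℕ => (1 - r) * ((n : ℝ) ^ 2 * r ^ n) - 2 * c * (1 - r) * ((n : ℝ) * r ^ n)
          + c ^ 2 * (1 - r) * r ^ n := by
      funext n; ring
    rw [heq, Summable.tsum_add ((sg2.mul_left (1 - r)).sub (sg1.mul_left (2 * c * (1 - r))))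
      (sg0.mul_left (c ^ 2 * (1 - r))),
      Summable.tsum_sub (sg2.mul_left (1 - r)) (sg1.mul_left (2 * c * (1 - r))),
      tsum_mul_left, tsum_mul_left, tsum_mul_left, S0, S1, S2, hc]
    field_simp
    ring
  have had : Summable (fun n : ℕ => ((n : ℝ) - c) * (w (n + 1) - w n)) := by
    have h := hnd.sub (hd_s.mul_left c)
    refine h.congr fun n => ?_
    ring
  have sum_ad : (∑' n : ℕ, ((n : ℝ) - c) * (w (n + 1) - w n)) = (1 + r) / (1 - r) * w 0 := by
    have heq : (fun n : ℕ => ((n : ℝ) - c) * (w (n + 1) - w n))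
        = fun n : ℕ => (n : ℝ) * (w (n + 1) - w n) - c * (w (n + 1) - w n) := by
      funext n; ring
    rw [heq, Summable.tsum_sub hnd (hd_s.mul_left c), tsum_mul_left, sum_nd, sum_d, hc]
    field_simp
    ring
  have hpt : ∀ n : ℕ, 2 * lam * (((n : ℝ) - c) * (w (n + 1) - w n))
      ≤ lam ^ 2 * (((n : ℝ) - c) ^ 2 * ((1 - r) * r ^ n))
        + (w (n + 1) - w n) ^ 2 / ((1 - r) * r ^ n) := by
    intro n
    have hp : 0 < (1 - r) * r ^ n := mul_pos hr1' (pow_pos hr0 n)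
    have h2 : 2 * lam * (((n : ℝ) - c) * (w (n + 1) - w n))
        - lam ^ 2 * (((n : ℝ) - c) ^ 2 * ((1 - r) * r ^ n))
        ≤ (w (n + 1) - w n) ^ 2 / ((1 - r) * r ^ n) := by
      rw [le_div_iff₀ hp]
      nlinarith [sq_nonneg (lam * ((n : ℝ) - c) * ((1 - r) * r ^ n) - (w (n + 1) - w n)), hp]
    linarith
  have hmain := Summable.tsum_le_tsum hpt (had.mul_left (2 * lam))
    ((hadp.mul_left (lam ^ 2)).add hD)
  rw [tsum_mul_left, Summable.tsum_add (hadp.mul_left (lam ^ 2)) hD, tsum_mul_left, sum_ad, Mval] at hmain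
  have e1 : 2 * lam * ((1 + r) / (1 - r) * w 0) = 2 * ((1 + r) / r * w 0 ^ 2) := by
    rw [hlam]; field_simp
  have e2 : lam ^ 2 * (r * (1 + r) / (1 - r) ^ 2) = (1 + r) / r * w 0 ^ 2 := by
    rw [hlam]; field_simp
  rw [e1, e2] at hmain
  linarith

/-- the boundary terms in the linearized energy dissipation are dominated by
the weighted Dirichlet forms, so that the linearized energy is non-increasing. -/
theorem stmt_16 (μ γ nh : ℝ) (hμ : 0 < μ) (hγ : γ ∈ Set.Ioo (0 : ℝ) 1)
    (hnh : nh ∈ Set.Ioo (0 : ℝ) 1)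
    (wc wh : ℕ → ℝ)
    (h1 : Summable (fun n : ℕ => |wc n|)) (h2 : Summable (fun n : ℕ => |wh n|))
    (h3 : Summable (fun n : ℕ => (n : ℝ) * |wc n|))
    (h4 : Summable (fun n : ℕ => (n : ℝ) * |wh n|))
    (h5 : (∑' n, wc n) = 0) (h6 : (∑' n, wh n) = 0)
    (rW : ℝ) (hrW : rW = -(1 - nh) * (1 - γ) * wc 0 - nh * wh 0)
    (h7 : Summable (fun n : ℕ => (wh (n + 1) - wh n) ^ 2 / pbarh μ γ nh n))
    (h8 : Summable (fun n : ℕ => (wc (n + 1) - wc n) ^ 2 / pbarc μ γ nh n)) :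
    nh * wh 0 ^ 2 + (1 - nh) * (1 - γ) * wc 0 ^ 2 + rW ^ 2 / rbar μ γ nh ≤
      nh * (∑' n : ℕ, (wh (n + 1) - wh n) ^ 2 / pbarh μ γ nh n) +
        (1 - nh) * (1 - γ) * (∑' n : ℕ, (wc (n + 1) - wc n) ^ 2 / pbarc μ γ nh n) := by
  obtain ⟨hγ0, hγ1⟩ := hγ
  obtain ⟨hnh0, hnh1⟩ := hnh
  obtain ⟨hr0, hrγ⟩ := rbar_bounds μ γ nh hμ hγ0 hγ1 hnh0 hnh1
  have h1γ : (0:ℝ) < 1 - γ := by linarith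
  simp only [pbarh, pbarc] at h7 h8 ⊢
  set r := rbar μ γ nh with hrdef
  have hr1 : r < 1 := by linarith
  set t : ℝ := r / (1 - γ) with htdef
  have ht0 : 0 < t := div_pos hr0 h1γ
  have ht1 : t < 1 := (div_lt_one h1γ).mpr (by linarith)
  have keyh := key_lemma r hr0 hr1 wh h2 h4 h6 h7
  have keyc := key_lemma t ht0 ht1 wc h1 h3 h5 h8
  set x := wh 0
  set y := wc 0
  have hDh := mul_le_mul_of_nonneg_left keyh (le_of_lt hnh0)
  have hDc := mul_le_mul_of_nonneg_left keyc
    (le_of_lt (mul_pos (by linarith : (0:ℝ) < 1 - nh) h1γ))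
  have hfin : (nh * x + (1 - nh) * (1 - γ) * y) ^ 2 ≤ nh * x ^ 2 + (1 - nh) * (1 - γ) ^ 2 * y ^ 2 := by
    have hprod : 0 ≤ nh * (1 - nh) * (x - (1 - γ) * y) ^ 2 :=
      mul_nonneg (mul_nonneg hnh0.le (by linarith)) (sq_nonneg _)
    nlinarith [hprod]
  have hrW2 : rW ^ 2 = (nh * x + (1 - nh) * (1 - γ) * y) ^ 2 := by rw [hrW]; ring
  have hdiv : rW ^ 2 / r ≤ (nh * x ^ 2 + (1 - nh) * (1 - γ) ^ 2 * y ^ 2) / r := by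
    rw [hrW2]
    exact (div_le_div_iff_of_pos_right hr0).mpr hfin
  have hident : nh * ((1 + r) / r * x ^ 2) + (1 - nh) * (1 - γ) * ((1 + t) / t * y ^ 2)
      = nh * x ^ 2 + (1 - nh) * (1 - γ) * y ^ 2
        + (nh * x ^ 2 + (1 - nh) * (1 - γ) ^ 2 * y ^ 2) / r := by
    rw [htdef]
    field_simp
    ring
  linarith [hDh, hDc, hdiv, hident]
end

section
/- Let μ > 0, γ ∈ (0,1), n_h ∈ [0,1), n_c = 1 − n_h, and let r̄, p̄^h, p̄^c be as defined. Then the equilibrium mean wealth of a typical honest player is strictly smaller than that of a typical probabilistic cheater: Σ_{n≥0} n·p̄^h_n = r̄/(1−r̄) < r̄/(1−γ−r̄) = Σ_{n≥0} n·p̄^c_n. -/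
lemma rbar_bounds_s19 (μ γ nh : ℝ) (hμ : 0 < μ) (hγ : γ ∈ Set.Ioo (0 : ℝ) 1)
    (hnh : nh ∈ Set.Ico (0 : ℝ) 1) :
    0 < rbar μ γ nh ∧ rbar μ γ nh < 1 - γ := by
  obtain ⟨hγ0, hγ1⟩ := hγ
  obtain ⟨hnh0, hnh1⟩ := hnh
  have h1γ : 0 < 1 - γ := by linarith
  set A : ℝ := (2 - γ) * μ + (1 - γ * nh) with hA
  set D : ℝ := A ^ 2 - 4 * (1 - γ) * (μ + 1) * μ with hD
  set B : ℝ := A - 2 * (μ + 1) * (1 - γ) with hB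
  have hAgt : (μ + 1) * (1 - γ) + μ < A := by
    have : A - ((μ + 1) * (1 - γ) + μ) = γ * (1 - nh) := by ring
    nlinarith [mul_pos hγ0 (by linarith : (0:ℝ) < 1 - nh)]
  have hApos : 0 < A := by nlinarith
  have hDB : B ^ 2 < D := by
    have e : D - B ^ 2 = 4 * (μ + 1) * (1 - γ) * (A - μ - (μ + 1) * (1 - γ)) := by ring
    have h5 : 0 < A - μ - (μ + 1) * (1 - γ) := by linarith
    nlinarith [mul_pos (mul_pos (show (0:ℝ) < 4 * (μ + 1) by linarith) h1γ) h5]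
  have hDpos : 0 < D := lt_of_le_of_lt (sq_nonneg B) hDB
  have hDA : D < A ^ 2 := by
    nlinarith [mul_pos (mul_pos (mul_pos (show (0:ℝ) < 4 by norm_num) h1γ)
      (show (0:ℝ) < μ + 1 by linarith)) hμ]
  have hsqrt_lt : Real.sqrt D < A := by
    rw [show A = Real.sqrt (A ^ 2) from (Real.sqrt_sq hApos.le).symm]
    exact Real.sqrt_lt_sqrt hDpos.le hDA
  have hB_lt : B < Real.sqrt D := by
    calc B ≤ |B| := le_abs_self B
    _ = Real.sqrt (B ^ 2) := (Real.sqrt_sq_eq_abs B).symm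
    _ < Real.sqrt D := Real.sqrt_lt_sqrt (sq_nonneg B) hDB
  have hden : 0 < 2 * (μ + 1) := by linarith
  constructor
  · apply div_pos _ hden
    linarith
  · rw [rbar, div_lt_iff₀ hden]
    have : B < Real.sqrt (((2 - γ) * μ + (1 - γ * nh)) ^ 2 - 4 * (1 - γ) * (μ + 1) * μ) := hB_lt
    rw [hB, hA] at this
    linarith

/-- at equilibrium, the mean wealth of a typical honest player is strictly
smaller than the mean wealth of a typical probabilistic cheater. -/
theorem stmt_19 (μ γ nh : ℝ) (hμ : 0 < μ) (hγ : γ ∈ Set.Ioo (0 : ℝ) 1)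
    (hnh : nh ∈ Set.Ico (0 : ℝ) 1) :
    (∑' n : ℕ, (n : ℝ) * pbarh μ γ nh n) = rbar μ γ nh / (1 - rbar μ γ nh) ∧
      rbar μ γ nh / (1 - rbar μ γ nh) < rbar μ γ nh / (1 - γ - rbar μ γ nh) ∧
      rbar μ γ nh / (1 - γ - rbar μ γ nh) = (∑' n : ℕ, (n : ℝ) * pbarc μ γ nh n) := by
  obtain ⟨hr0, hr1γ⟩ := rbar_bounds_s19 μ γ nh hμ hγ hnh
  obtain ⟨hγ0, hγ1⟩ := hγ
  set r : ℝ := rbar μ γ nh with hr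
  have h1γ : 0 < 1 - γ := by linarith
  have hr1 : r < 1 := by linarith
  have hnr : 0 < 1 - r := by linarith
  have hnγr : 0 < 1 - γ - r := by linarith
  -- honest sum
  have hsum1 : ∑' n : ℕ, (n : ℝ) * pbarh μ γ nh n = r / (1 - r) := by
    have hnorm : ‖r‖ < 1 := by rw [Real.norm_eq_abs, abs_lt]; constructor <;> linarith
    have hgeo := tsum_coe_mul_geometric_of_norm_lt_one hnorm
    have : ∑' n : ℕ, (n : ℝ) * pbarh μ γ nh n
        = (1 - r) * ∑' n : ℕ, (n : ℝ) * r ^ n := by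
      rw [← tsum_mul_left]
      congr 1; funext n; simp [pbarh, ← hr]; ring
    rw [this, hgeo]
    field_simp
  -- cheater sum
  have hsum2 : ∑' n : ℕ, (n : ℝ) * pbarc μ γ nh n = r / (1 - γ - r) := by
    set s : ℝ := r / (1 - γ) with hs
    have hs0 : 0 < s := div_pos hr0 h1γ
    have hs1 : s < 1 := (div_lt_one h1γ).mpr (by linarith)
    have hnorm : ‖s‖ < 1 := by rw [Real.norm_eq_abs, abs_lt]; constructor <;> linarith
    have hgeo := tsum_coe_mul_geometric_of_norm_lt_one hnorm
    have : ∑' n : ℕ, (n : ℝ) * pbarc μ γ nh n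
        = (1 - s) * ∑' n : ℕ, (n : ℝ) * s ^ n := by
      rw [← tsum_mul_left]
      congr 1; funext n; simp [pbarc, ← hr, ← hs]; ring
    rw [this, hgeo, hs]
    have h2 : (1 - γ - r) ≠ 0 := hnγr.ne'
    have h3 : (1 - γ) ≠ 0 := h1γ.ne'
    have h4 : (1 - r / (1 - γ)) ≠ 0 := by
      have : 0 < 1 - r / (1 - γ) := by
        have : r / (1 - γ) < 1 := (div_lt_one h1γ).mpr (by linarith)
        linarith
      exact this.ne'
    field_simp
  refine ⟨hsum1, ?_, hsum2.symm⟩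
  exact div_lt_div_of_pos_left hr0 hnγr (by linarith)
end
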